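/- arXiv:2205.03387 — 9 statements merged into one kernel-verified Lean document; each statement's English description precedes it below -/
import Mathlib

section
/- Consider the Lie algebra 𝔡 := span_ℂ{x∂x, x∂y, y∂x, y∂y} of linear vector fields acting on binary quartics. Then: (i) the annihilator of y^4 in 𝔡 equals span{x∂x, y∂x}; (ii) the annihilator of x·y^3 equals span{-3·x∂x + y∂y}; (iii) the annihilator of x^2·y^2 equals span{x∂x - y∂y}; (iv) the annihilator of x^2·y·(x-y) is zero; (v) for every k ∈ ℂ with k ∉ {0,1}, the annihilator of x·y·(x-y)·(x-k·y) is zero. (These are the annihilators ann(φ) of the normal forms of the root types N, III, D, II, I of the Cartan quartic, under the identification of 𝔤₀ ≅ 𝔤𝔩(2,ℂ) with linear vector fields.) -/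
set_option maxHeartbeats 1000000

open MvPolynomial

/-- The action of the linear vector field `a·x∂x + b·x∂y + c·y∂x + d·y∂y` on a
polynomial in the two variables `x = X 0`, `y = X 1`. -/
noncomputable def vf (a b c d : ℂ) (p : MvPolynomial (Fin 2) ℂ) : MvPolynomial (Fin 2) ℂ :=
  C a * (X 0 * pderiv 0 p) + C b * (X 0 * pderiv 1 p) +
    C c * (X 1 * pderiv 0 p) + C d * (X 1 * pderiv 1 p)

theorem annihilators_of_quartic_normal_forms :
    (∀ a b c d : ℂ, vf a b c d ((X 1 : MvPolynomial (Fin 2) ℂ) ^ 4) = 0 ↔ (b = 0 ∧ d = 0)) ∧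
    (∀ a b c d : ℂ, vf a b c d ((X 0 : MvPolynomial (Fin 2) ℂ) * X 1 ^ 3) = 0 ↔
      (b = 0 ∧ c = 0 ∧ a = -3 * d)) ∧
    (∀ a b c d : ℂ, vf a b c d ((X 0 : MvPolynomial (Fin 2) ℂ) ^ 2 * X 1 ^ 2) = 0 ↔
      (b = 0 ∧ c = 0 ∧ d = -a)) ∧
    (∀ a b c d : ℂ, vf a b c d ((X 0 : MvPolynomial (Fin 2) ℂ) ^ 2 * X 1 * (X 0 - X 1)) = 0 ↔
      (a = 0 ∧ b = 0 ∧ c = 0 ∧ d = 0)) ∧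
    (∀ k : ℂ, k ≠ 0 → k ≠ 1 →
      ∀ a b c d : ℂ,
        vf a b c d ((X 0 : MvPolynomial (Fin 2) ℂ) * X 1 * (X 0 - X 1) * (X 0 - C k * X 1)) = 0 ↔
        (a = 0 ∧ b = 0 ∧ c = 0 ∧ d = 0)) := by
  refine ⟨?_, ?_, ?_, ?_, ?_⟩
  · -- N : y^4
    intro a b c d
    constructor
    · intro h
      have h1 := congrArg (eval ![0,1]) h
      have h2 := congrArg (eval ![1,1]) h
      simp [vf, pderiv_pow] at h1 h2
      exact ⟨by linear_combination h2/4 - h1, h1⟩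
    · rintro ⟨rfl, rfl⟩
      simp [vf, pderiv_pow]
  · -- III : x·y^3
    intro a b c d
    constructor
    · intro h
      have h1 := congrArg (eval ![0,1]) h
      have h2 := congrArg (eval ![1,1]) h
      have h3 := congrArg (eval ![1,-1]) h
      simp [vf, pderiv_mul, pderiv_pow] at h1 h2 h3
      exact ⟨by linear_combination h2/6 + h3/6 - h1/3, h1,
        by linear_combination h2/2 - h3/2⟩
    · rintro ⟨rfl, rfl, rfl⟩
      simp [vf, pderiv_mul, pderiv_pow, map_ofNat]
      ring
  · -- D : x^2·y^2
    intro a b c d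
    constructor
    · intro h
      have h1 := congrArg (eval ![1,1]) h
      have h2 := congrArg (eval ![1,-1]) h
      have h3 := congrArg (eval ![2,1]) h
      have h4 := congrArg (eval ![1,2]) h
      simp [vf, pderiv_mul, pderiv_pow] at h1 h2 h3 h4
      exact ⟨by linear_combination h1/8 - h2/8 + h3/24 - h4/24,
        by linear_combination h1/8 - h2/8 - h3/24 + h4/24,
        by linear_combination h1/4 + h2/4⟩
    · rintro ⟨rfl, rfl, rfl⟩
      simp [vf, pderiv_mul, pderiv_pow]
      ring
  · -- II : x^2·y·(x-y)
    intro a b c d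
    constructor
    · intro h
      have h0 := congrArg (eval ![1,0]) h
      have h1 := congrArg (eval ![1,1]) h
      have h2 := congrArg (eval ![1,-1]) h
      have h3 := congrArg (eval ![2,1]) h
      simp [vf, pderiv_mul, pderiv_pow] at h0 h1 h2 h3
      have ha : a = 0 := by linear_combination h1/4 - h2/12 + h3/48 + h0/2
      have hc : c = 0 := by linear_combination h3/8 - 2*ha
      have hd : d = 0 := by linear_combination ha - h0 + hc - h1
      exact ⟨ha, h0, hc, hd⟩
    · rintro ⟨rfl, rfl, rfl, rfl⟩
      simp [vf]
  · -- I : x·y·(x-y)·(x-k·y)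
    intro k hk0 hk1 a b c d
    constructor
    · intro h
      have h0 := congrArg (eval ![1,0]) h
      have h1 := congrArg (eval ![0,1]) h
      have h2 := congrArg (eval ![1,1]) h
      have h3 := congrArg (eval ![1,-1]) h
      have h4 := congrArg (eval ![2,1]) h
      simp [vf, pderiv_mul] at h0 h1 h2 h3 h4
      have hc : c = 0 := h1.resolve_right hk0
      subst h0 hc
      have had : (1 - k) * (a - d) = 0 := by linear_combination h2
      rcases mul_eq_zero.mp had with h' | h'
      · exact absurd (by linear_combination -h' : k = 1) hk1
      · have had' : a = d := by linear_combination h'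
        subst had'
        have ha : a = 0 := by linear_combination (-(1:ℂ)/24)*h3 + (1/24)*h4
        exact ⟨ha, rfl, rfl, ha⟩
    · rintro ⟨rfl, rfl, rfl, rfl⟩
      simp [vf]
end

section
/- For every nonzero binary quartic φ and all a, b ∈ ℂ: if a·(-x∂x + 2y∂y)(φ) - 3b·(x∂y)(φ) = 0 and b·(2x∂x - y∂y)(φ) - 3a·(y∂x)(φ) = 0, then a = b = 0. (This is the operator form of the Lemma asserting that (G2,P1) is prolongation-rigid: for every nonzero harmonic curvature φ, the degree-one part a₁^φ = {X ∈ 𝔤₁ : [X,𝔤₋₁] ⊆ ann(φ)} of the Tanaka prolongation vanishes, hence a^φ₊ = 0; the two displayed operators are the images of [a·e10 + b·e11, f10] and [a·e10 + b·e11, f11] under the identification of 𝔤₀ with linear vector fields via Z1 ↦ x∂x + y∂y, Z2 ↦ x∂x, e01 ↦ x∂y, f01 ↦ y∂x.) -/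
/-!
On `x^i y^j` the operator `-x∂x + 2y∂y` acts by the scalar `2j - i`, which never vanishes in
degree `i + j = 4` because `3 ∤ 4`, while `x∂y` strictly raises the `x`-degree. So for `a ≠ 0`
the first equation is triangular with invertible diagonal in the monomial basis ordered by
`x`-degree, and forces `φ = 0` by induction on that degree. The second equation is the first
one with `x` and `y` interchanged, so it forces `φ = 0` when `b ≠ 0`.
-/

open Finsupp

namespace MvPolynomial

variable {σ R : Type*} [CommSemiring R]

theorem coeff_X_mul_pderiv_self (i : σ) (m : σ →₀ ℕ) (p : MvPolynomial σ R) :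
    coeff m (X i * pderiv i p) = m i * coeff m p := by
  classical
  rw [coeff_X_mul']
  by_cases hm : m i = 0
  · simp [hm]
  · rw [if_pos (Finsupp.mem_support_iff.mpr hm), coeff_pderiv, sub_add_single_one_cancel hm,
      mul_comm, tsub_apply, single_eq_same, ← Nat.cast_add_one,
      Nat.sub_add_cancel (Nat.one_le_iff_ne_zero.mpr hm)]

theorem coeff_X_mul_pderiv_eq_zero {i j : σ} (hij : i ≠ j) (p : MvPolynomial σ R)
    (m : σ →₀ ℕ) (hp : ∀ m' : σ →₀ ℕ, m' i < m i → coeff m' p = 0) :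
    coeff m (X i * pderiv j p) = 0 := by
  classical
  rw [coeff_X_mul']
  split_ifs with hm
  · rw [coeff_pderiv, hp, zero_mul]
    rw [Finsupp.mem_support_iff] at hm
    rw [Finsupp.add_apply, tsub_apply, single_eq_same, single_eq_of_ne hij, add_zero]
    omega
  · rfl

end MvPolynomial

theorem Finsupp.degree_fin_two {i j : Fin 2} (hij : i ≠ j) (m : Fin 2 →₀ ℕ) :
    m.degree = m i + m j := by
  rw [degree_eq_sum, Fin.sum_univ_two]
  fin_cases i <;> fin_cases j <;> simp_all [add_comm]

theorem MvPolynomial.IsHomogeneous.eq_zero_of_weight_triangular {K : Type*} [Field K]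
    [CharZero K] {n : ℕ} (hn : ¬ 3 ∣ n) {i j : Fin 2} (hij : i ≠ j)
    {φ : MvPolynomial (Fin 2) K} (hφ : φ.IsHomogeneous n) {a c : K} (ha : a ≠ 0)
    (h : C a * (-(X i * pderiv i φ) + 2 * (X j * pderiv j φ)) - C c * (X i * pderiv j φ) = 0) :
    φ = 0 := by
  rw [← map_ofNat C 2] at h
  suffices ∀ k m, m i = k → coeff m φ = 0 from eq_zero_iff.mpr fun m => this _ m rfl
  intro k
  induction k using Nat.strong_induction_on with
  | _ k ih =>
  rintro m rfl
  by_cases hdeg : m.degree = n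
  swap
  · exact hφ.coeff_eq_zero hdeg
  rw [degree_fin_two hij] at hdeg
  have hweight : -(m i : K) + 2 * m j ≠ 0 := by
    rw [neg_add_eq_sub, sub_ne_zero]
    exact_mod_cast (by omega : 2 * m j ≠ m i)
  have hcross : coeff m (X i * pderiv j φ) = 0 :=
    coeff_X_mul_pderiv_eq_zero hij φ m fun m' hm' => ih _ hm' m' rfl
  have hm := congrArg (coeff m) h
  simp only [coeff_sub, coeff_add, coeff_neg, coeff_C_mul, coeff_X_mul_pderiv_self, hcross,
    coeff_zero] at hm
  have : a * (-(m i : K) + 2 * m j) * coeff m φ = 0 := by linear_combination hm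
  simpa [ha, hweight] using this

set_option maxHeartbeats 1000000

open MvPolynomial

theorem prolongation_rigid (φ : MvPolynomial (Fin 2) ℂ) (hφ0 : φ ≠ 0)
    (hφ4 : φ.IsHomogeneous 4) (a b : ℂ)
    (h1 : C a * (-(X 0 * pderiv 0 φ) + 2 * (X 1 * pderiv 1 φ)) -
        C (3 * b) * (X 0 * pderiv 1 φ) = 0)
    (h2 : C b * (2 * (X 0 * pderiv 0 φ) - X 1 * pderiv 1 φ) -
        C (3 * a) * (X 1 * pderiv 0 φ) = 0) :
    a = 0 ∧ b = 0 := by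
  by_contra hab
  rcases not_and_or.mp hab with ha | hb
  · exact hφ0 (hφ4.eq_zero_of_weight_triangular (by norm_num) zero_ne_one ha h1)
  · exact hφ0 (hφ4.eq_zero_of_weight_triangular (by norm_num) one_ne_zero hb
      (c := 3 * a) (by linear_combination h2))
end

section
/- (Key step of the Proposition that multiply-transitive type III.6 algebraic models do not exist.) Let a, b, c ∈ ℂ. In 𝔤, set T := Z1 - 4·Z2, X1 := f10 + a·e31, X4 := f31 + b·e10, and let 𝔣 := span_ℂ{T, X1, f11, f21, X4, f32}. If the three elements [X1, f21], [X1, f32] - c·f01, and [X1, X4] - c·(-Z1 + 2·Z2) all lie in 𝔣, then a = b = c = 0. -/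
set_option maxHeartbeats 1000000

theorem type_III6_nonexistence_key_step
    {g : Type*} [LieRing g] [LieAlgebra ℂ g]
    (Z1 Z2 e01 e10 e11 e21 e31 e32 f01 f10 f11 f21 f31 f32 : g)
    (hindep : LinearIndependent ℂ ![Z1, Z2, e01, e10, e11, e21, e31, e32, f01, f10, f11, f21, f31, f32])
    (hspan : Submodule.span ℂ (Set.range ![Z1, Z2, e01, e10, e11, e21, e31, e32, f01, f10, f11, f21, f31, f32]) = ⊤)
    (hZ1Z2 : ⁅Z1, Z2⁆ = 0)
    (hZ1e01 : ⁅Z1, e01⁆ = 0)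
    (hZ1e10 : ⁅Z1, e10⁆ = e10)
    (hZ1e11 : ⁅Z1, e11⁆ = e11)
    (hZ1e21 : ⁅Z1, e21⁆ = (2 : ℂ) • e21)
    (hZ1e31 : ⁅Z1, e31⁆ = (3 : ℂ) • e31)
    (hZ1e32 : ⁅Z1, e32⁆ = (3 : ℂ) • e32)
    (hZ1f01 : ⁅Z1, f01⁆ = 0)
    (hZ1f10 : ⁅Z1, f10⁆ = -f10)
    (hZ1f11 : ⁅Z1, f11⁆ = -f11)
    (hZ1f21 : ⁅Z1, f21⁆ = (-2 : ℂ) • f21)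
    (hZ1f31 : ⁅Z1, f31⁆ = (-3 : ℂ) • f31)
    (hZ1f32 : ⁅Z1, f32⁆ = (-3 : ℂ) • f32)
    (hZ2e01 : ⁅Z2, e01⁆ = e01)
    (hZ2e10 : ⁅Z2, e10⁆ = 0)
    (hZ2e11 : ⁅Z2, e11⁆ = e11)
    (hZ2e21 : ⁅Z2, e21⁆ = e21)
    (hZ2e31 : ⁅Z2, e31⁆ = e31)
    (hZ2e32 : ⁅Z2, e32⁆ = (2 : ℂ) • e32)
    (hZ2f01 : ⁅Z2, f01⁆ = -f01)
    (hZ2f10 : ⁅Z2, f10⁆ = 0)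
    (hZ2f11 : ⁅Z2, f11⁆ = -f11)
    (hZ2f21 : ⁅Z2, f21⁆ = -f21)
    (hZ2f31 : ⁅Z2, f31⁆ = -f31)
    (hZ2f32 : ⁅Z2, f32⁆ = (-2 : ℂ) • f32)
    (he01e10 : ⁅e01, e10⁆ = -e11)
    (he01e11 : ⁅e01, e11⁆ = 0)
    (he01e21 : ⁅e01, e21⁆ = 0)
    (he01e31 : ⁅e01, e31⁆ = e32)
    (he01e32 : ⁅e01, e32⁆ = 0)
    (he01f01 : ⁅e01, f01⁆ = -Z1 + (2 : ℂ) • Z2)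
    (he01f10 : ⁅e01, f10⁆ = 0)
    (he01f11 : ⁅e01, f11⁆ = f10)
    (he01f21 : ⁅e01, f21⁆ = 0)
    (he01f31 : ⁅e01, f31⁆ = 0)
    (he01f32 : ⁅e01, f32⁆ = -f31)
    (he10e11 : ⁅e10, e11⁆ = (2 : ℂ) • e21)
    (he10e21 : ⁅e10, e21⁆ = (-3 : ℂ) • e31)
    (he10e31 : ⁅e10, e31⁆ = 0)
    (he10e32 : ⁅e10, e32⁆ = 0)
    (he10f01 : ⁅e10, f01⁆ = 0)
    (he10f10 : ⁅e10, f10⁆ = (2 : ℂ) • Z1 + (-3 : ℂ) • Z2)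
    (he10f11 : ⁅e10, f11⁆ = (-3 : ℂ) • f01)
    (he10f21 : ⁅e10, f21⁆ = (-2 : ℂ) • f11)
    (he10f31 : ⁅e10, f31⁆ = f21)
    (he10f32 : ⁅e10, f32⁆ = 0)
    (he11e21 : ⁅e11, e21⁆ = (3 : ℂ) • e32)
    (he11e31 : ⁅e11, e31⁆ = 0)
    (he11e32 : ⁅e11, e32⁆ = 0)
    (he11f01 : ⁅e11, f01⁆ = e10)
    (he11f10 : ⁅e11, f10⁆ = (-3 : ℂ) • e01)
    (he11f11 : ⁅e11, f11⁆ = -Z1 + (3 : ℂ) • Z2)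
    (he11f21 : ⁅e11, f21⁆ = (2 : ℂ) • f10)
    (he11f31 : ⁅e11, f31⁆ = 0)
    (he11f32 : ⁅e11, f32⁆ = -f21)
    (he21e31 : ⁅e21, e31⁆ = 0)
    (he21e32 : ⁅e21, e32⁆ = 0)
    (he21f01 : ⁅e21, f01⁆ = 0)
    (he21f10 : ⁅e21, f10⁆ = (-2 : ℂ) • e11)
    (he21f11 : ⁅e21, f11⁆ = (2 : ℂ) • e10)
    (he21f21 : ⁅e21, f21⁆ = Z1)
    (he21f31 : ⁅e21, f31⁆ = -f10)
    (he21f32 : ⁅e21, f32⁆ = f11)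
    (he31e32 : ⁅e31, e32⁆ = 0)
    (he31f01 : ⁅e31, f01⁆ = 0)
    (he31f10 : ⁅e31, f10⁆ = e21)
    (he31f11 : ⁅e31, f11⁆ = 0)
    (he31f21 : ⁅e31, f21⁆ = -e10)
    (he31f31 : ⁅e31, f31⁆ = Z1 + -Z2)
    (he31f32 : ⁅e31, f32⁆ = f01)
    (he32f01 : ⁅e32, f01⁆ = -e31)
    (he32f10 : ⁅e32, f10⁆ = 0)
    (he32f11 : ⁅e32, f11⁆ = -e21)
    (he32f21 : ⁅e32, f21⁆ = e11)
    (he32f31 : ⁅e32, f31⁆ = e01)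
    (he32f32 : ⁅e32, f32⁆ = Z2)
    (hf01f10 : ⁅f01, f10⁆ = f11)
    (hf01f11 : ⁅f01, f11⁆ = 0)
    (hf01f21 : ⁅f01, f21⁆ = 0)
    (hf01f31 : ⁅f01, f31⁆ = -f32)
    (hf01f32 : ⁅f01, f32⁆ = 0)
    (hf10f11 : ⁅f10, f11⁆ = (-2 : ℂ) • f21)
    (hf10f21 : ⁅f10, f21⁆ = (3 : ℂ) • f31)
    (hf10f31 : ⁅f10, f31⁆ = 0)
    (hf10f32 : ⁅f10, f32⁆ = 0)
    (hf11f21 : ⁅f11, f21⁆ = (-3 : ℂ) • f32)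
    (hf11f31 : ⁅f11, f31⁆ = 0)
    (hf11f32 : ⁅f11, f32⁆ = 0)
    (hf21f31 : ⁅f21, f31⁆ = 0)
    (hf21f32 : ⁅f21, f32⁆ = 0)
    (hf31f32 : ⁅f31, f32⁆ = 0)
    (a b c : ℂ)
    (F : Submodule ℂ g)
    (hF : F = Submodule.span ℂ
      {Z1 - (4 : ℂ) • Z2, f10 + a • e31, f11, f21, f31 + b • e10, f32})
    (h1 : ⁅f10 + a • e31, f21⁆ ∈ F)
    (h2 : ⁅f10 + a • e31, f32⁆ - c • f01 ∈ F)
    (h3 : ⁅f10 + a • e31, f31 + b • e10⁆ - c • (-Z1 + (2 : ℂ) • Z2) ∈ F) :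
    a = 0 ∧ b = 0 ∧ c = 0 := by
  have k1 : ⁅f10, e10⁆ = -((2:ℂ) • Z1 + (-3:ℂ) • Z2) := by rw [← lie_skew, he10f10]
  have k2 : ⁅e31, e10⁆ = 0 := by rw [← lie_skew, he10e31, neg_zero]
  simp only [add_lie, smul_lie, lie_add, lie_smul, hf10f21, he31f21, hf10f32, he31f32,
    hf10f31, k1, k2, he31f31, smul_zero, zero_add, add_zero, smul_neg] at h1 h2 h3
  rw [hF] at h1 h2 h3
  simp only [Submodule.mem_span_insert, Submodule.mem_span_singleton] at h1 h2 h3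
  obtain ⟨t1, _, ⟨t2, _, ⟨t3, _, ⟨t4, _, ⟨t5, _, ⟨t6, rfl⟩, rfl⟩, rfl⟩, rfl⟩, rfl⟩, e1⟩ := h1
  obtain ⟨u1, _, ⟨u2, _, ⟨u3, _, ⟨u4, _, ⟨u5, _, ⟨u6, rfl⟩, rfl⟩, rfl⟩, rfl⟩, rfl⟩, e2⟩ := h2
  obtain ⟨s1, _, ⟨s2, _, ⟨s3, _, ⟨s4, _, ⟨s5, _, ⟨s6, rfl⟩, rfl⟩, rfl⟩, rfl⟩, rfl⟩, e3⟩ := h3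
  have key := Fintype.linearIndependent_iff.mp hindep
  have K1 := key ![t1, -4*t1, 0, b*t5+a, 0, 0, a*t2, 0, 0, t2, t3, t4, t5-3, t6] (by
    simp only [Fin.sum_univ_succ, Fin.sum_univ_zero, Matrix.cons_val_zero, Matrix.cons_val_succ]
    linear_combination (norm := module) -e1)
  have K2 := key ![u1, -4*u1, 0, b*u5, 0, 0, a*u2, 0, c-a, u2, u3, u4, u5, u6] (by
    simp only [Fin.sum_univ_succ, Fin.sum_univ_zero, Matrix.cons_val_zero, Matrix.cons_val_succ]
    linear_combination (norm := module) -e2)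
  have K3 := key ![s1-(a-2*b+c), -4*s1-(-a+3*b-2*c), 0, b*s5, 0, 0, a*s2, 0, 0, s2, s3, s4, s5, s6] (by
    simp only [Fin.sum_univ_succ, Fin.sum_univ_zero, Matrix.cons_val_zero, Matrix.cons_val_succ]
    linear_combination (norm := module) -e3)
  simp only [Fin.forall_fin_succ, IsEmpty.forall_iff, Matrix.cons_val_zero, Matrix.cons_val_succ, and_true] at K1 K2 K3
  obtain ⟨-, -, -, q1, -, -, -, -, -, -, -, -, q2, -⟩ := K1
  obtain ⟨-, -, -, -, -, -, -, -, q3, -⟩ := K2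
  obtain ⟨q4, q5, -⟩ := K3
  have hA : a + 3*b = 0 := by linear_combination q1 - b*q2
  have hB : c - a = 0 := q3
  have hC : 3*a - 5*b + 2*c = 0 := by linear_combination -4*q4 - q5
  refine ⟨?_, ?_, ?_⟩
  · linear_combination (3/20)*hC + (1/4)*hA - (3/10)*hB
  · linear_combination -(1/20)*hC + (1/4)*hA + (1/10)*hB
  · linear_combination (3/20)*hC + (1/4)*hA + (7/10)*hB
end

section
/- For every c ∈ ℂ, the N.7_c bracket table satisfies the Jacobi identity, so it defines a 7-dimensional complex Lie algebra 𝔣. Moreover: 𝔣 is solvable; the subspace I := span{N, X2, X3, X4, X5} is an ideal of 𝔣 isomorphic to the 5-dimensional Heisenberg Lie algebra (its only nonzero basis brackets are [N,X4]=-X5 and [X2,X3]=-3X5, and its center is spanned by X5); and span{T, X1} is a 2-dimensional abelian subalgebra of 𝔣 complementary to I, so 𝔣 is a semidirect product ℂ² ⋉ heis₅. -/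
set_option maxHeartbeats 1000000

noncomputable def n7c (c : ℂ) : Fin 7 → Fin 7 → Fin 7 → ℂ :=
  ![![![0, 0, 0, 0, 0, 0, 0],
     ![0, (-1), 0, 0, 0, 0, 0],
     ![0, 0, 0, 0, 0, 0, 0],
     ![0, 0, 0, (-1), 0, 0, 0],
     ![0, 0, 0, 0, (-1), 0, 0],
     ![0, 0, 0, 0, 0, (-1), 0],
     ![0, 0, 0, 0, 0, 0, (-2)]],
   ![![0, 1, 0, 0, 0, 0, 0],
     ![0, 0, 0, 0, 0, 0, 0],
     ![0, 0, 0, 1, 0, 0, 0],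
     ![0, 0, 0, 0, 0, 0, 0],
     ![0, 0, 0, 0, 0, 0, 0],
     ![0, 0, 0, 0, 0, 0, (-1)],
     ![0, 0, 0, 0, 0, 0, 0]],
   ![![0, 0, 0, 0, 0, 0, 0],
     ![0, 0, 0, (-1), 0, 0, 0],
     ![0, 0, 0, 0, 0, 0, 0],
     ![0, (-(3*c)), 0, 0, (-2), 0, 0],
     ![0, 0, 0, (-(2*c)), 0, 3, 0],
     ![0, (-1), 0, 0, (c), 0, 0],
     ![0, 0, 0, 0, 0, 0, 0]],
   ![![0, 0, 0, 1, 0, 0, 0],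
     ![0, 0, 0, 0, 0, 0, 0],
     ![0, (-(-(3*c))), 0, 0, 2, 0, 0],
     ![0, 0, 0, 0, 0, 0, 0],
     ![0, 0, 0, 0, 0, 0, (-3)],
     ![0, 0, 0, 0, 0, 0, 0],
     ![0, 0, 0, 0, 0, 0, 0]],
   ![![0, 0, 0, 0, 1, 0, 0],
     ![0, 0, 0, 0, 0, 0, 0],
     ![0, 0, 0, (-(-(2*c))), 0, (-3), 0],
     ![0, 0, 0, 0, 0, 0, 3],
     ![0, 0, 0, 0, 0, 0, 0],
     ![0, 0, 0, 0, 0, 0, 0],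
     ![0, 0, 0, 0, 0, 0, 0]],
   ![![0, 0, 0, 0, 0, 1, 0],
     ![0, 0, 0, 0, 0, 0, 1],
     ![0, 1, 0, 0, (-(c)), 0, 0],
     ![0, 0, 0, 0, 0, 0, 0],
     ![0, 0, 0, 0, 0, 0, 0],
     ![0, 0, 0, 0, 0, 0, 0],
     ![0, 0, 0, 0, 0, 0, 0]],
   ![![0, 0, 0, 0, 0, 0, 2],
     ![0, 0, 0, 0, 0, 0, 0],
     ![0, 0, 0, 0, 0, 0, 0],
     ![0, 0, 0, 0, 0, 0, 0],
     ![0, 0, 0, 0, 0, 0, 0],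
     ![0, 0, 0, 0, 0, 0, 0],
     ![0, 0, 0, 0, 0, 0, 0]]]

noncomputable def n7br (c : ℂ) (x y : Fin 7 → ℂ) : Fin 7 → ℂ :=
  fun k => ∑ i : Fin 7, ∑ j : Fin 7, x i * y j * n7c c i j k

/-!
The Jacobi identity for the structure constants `n7c` is a polynomial identity in the coordinates,
checked one coordinate at a time after computing `n7br` explicitly.

In the Lie algebra `F`, the elements `N, X2, -X4, -X3/3, X5` satisfy the defining relations of
`heis₅`, so for `I = span {N, X2, X3, X4, X5}` the bracket is `⁅x, y⁆ = ω(x, y) X5` with `ω` the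
standard symplectic form; this gives `⁅I, I⁆ ⊆ ℂ X5` and that the centre of `I` is `ℂ X5`.
Since `ad T` and `ad X1` preserve `I` and `⁅T, X1⁆ = 0`, `I` is an ideal containing `⁅F, F⁆`, so
the derived series `F ⊇ ⁅F, F⁆ ⊆ I`, `⁅I, I⁆ ⊆ ℂ X5`, `⁅ℂ X5, ℂ X5⁆ = 0` shows that `F` is solvable.
-/

open Submodule LieAlgebra

theorem n7br_eq (c : ℂ) (x y : Fin 7 → ℂ) : n7br c x y =
    ![0,
      -(x 0 * y 1) + x 1 * y 0 - 3*c * (x 2 * y 3) - x 2 * y 5 + 3*c * (x 3 * y 2) + x 5 * y 2,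
      0,
      -(x 0 * y 3) + x 1 * y 2 - x 2 * y 1 - 2*c * (x 2 * y 4) + x 3 * y 0 + 2*c * (x 4 * y 2),
      -(x 0 * y 4) - 2 * (x 2 * y 3) + 2 * (x 3 * y 2) + c * (x 2 * y 5) - c * (x 5 * y 2)
        + x 4 * y 0,
      -(x 0 * y 5) + 3 * (x 2 * y 4) - 3 * (x 4 * y 2) + x 5 * y 0,
      -2 * (x 0 * y 6) - x 1 * y 5 - 3 * (x 3 * y 4) + 3 * (x 4 * y 3) + x 5 * y 1
        + 2 * (x 6 * y 0)] := by
  funext k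
  fin_cases k <;>
    simp only [n7br, n7c, Fin.sum_univ_seven, Matrix.cons_val, Fin.zero_eta, Fin.mk_one,
      Fin.reduceFinMk] <;>
    ring

theorem n7br_jacobi (c : ℂ) (x y z : Fin 7 → ℂ) :
    n7br c x (n7br c y z) + n7br c y (n7br c z x) + n7br c z (n7br c x y) = 0 := by
  simp only [n7br_eq]
  funext k
  fin_cases k <;>
    simp only [Pi.add_apply, Pi.zero_apply, Matrix.cons_val, Fin.zero_eta, Fin.mk_one,
      Fin.reduceFinMk] <;>
    ring

section Span

variable {R M : Type*} [Semiring R] [AddCommMonoid M] [Module R M]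

theorem mem_span_five_iff {v₁ v₂ v₃ v₄ v₅ x : M} :
    x ∈ span R {v₁, v₂, v₃, v₄, v₅} ↔
      ∃ a b c d e : R, a • v₁ + b • v₂ + c • v₃ + d • v₄ + e • v₅ = x := by
  constructor
  · intro hx
    obtain ⟨a, x₁, hx₁, rfl⟩ := mem_span_insert.mp hx
    obtain ⟨b, x₂, hx₂, rfl⟩ := mem_span_insert.mp hx₁
    obtain ⟨c, x₃, hx₃, rfl⟩ := mem_span_insert.mp hx₂
    obtain ⟨d, x₄, hx₄, rfl⟩ := mem_span_insert.mp hx₃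
    obtain ⟨e, rfl⟩ := mem_span_singleton.mp hx₄
    exact ⟨a, b, c, d, e, by simp only [add_assoc]⟩
  · rintro ⟨a, b, c, d, e, rfl⟩
    have hv : ∀ v ∈ ({v₁, v₂, v₃, v₄, v₅} : Set M), ∀ r : R, r • v ∈ span R {v₁, v₂, v₃, v₄, v₅} :=
      fun v hv r => smul_mem _ r (subset_span hv)
    exact add_mem (add_mem (add_mem (add_mem (hv _ (by simp) a) (hv _ (by simp) b))
      (hv _ (by simp) c)) (hv _ (by simp) d)) (hv _ (by simp) e)

theorem isCompl_span_pair_span_five {v₀ v₁ v₂ v₃ v₄ v₅ v₆ : M}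
    (hli : LinearIndependent R ![v₀, v₁, v₂, v₃, v₄, v₅, v₆])
    (hspan : span R (Set.range ![v₀, v₁, v₂, v₃, v₄, v₅, v₆]) = ⊤) :
    IsCompl (span R {v₀, v₂}) (span R {v₁, v₃, v₄, v₅, v₆}) := by
  have hidx : IsCompl ({0, 2} : Set (Fin 7)) {1, 3, 4, 5, 6} :=
    ⟨Set.disjoint_left.mpr (by decide),
      codisjoint_iff_le_sup.mpr fun i _ => by fin_cases i <;> simp⟩
  simpa [Set.image_insert_eq] using hli.isCompl_span_image hspan hidx

end Span

section LieBracketOnSpans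

variable {R L : Type*} [CommRing R] [LieRing L] [LieAlgebra R L]

theorem lie_mem_of_mem_span {s t : Set L} {p : Submodule R L}
    (h : ∀ x ∈ s, ∀ y ∈ t, ⁅x, y⁆ ∈ p) {x y : L} (hx : x ∈ span R s) (hy : y ∈ span R t) :
    ⁅x, y⁆ ∈ p :=
  LinearMap.BilinMap.apply_apply_mem_of_mem_span p s t
    (LieModule.toEnd R L L : L →ₗ[R] L →ₗ[R] L) h x y hx hy

theorem lie_mem_span_of_sup_eq_top {s t : Set L} (htop : span R s ⊔ span R t = ⊤)
    (hst : ∀ x ∈ s, ∀ y ∈ t, ⁅x, y⁆ ∈ span R t)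
    (htt : ∀ x ∈ span R t, ∀ y ∈ span R t, ⁅x, y⁆ ∈ span R t) (x : L) {y : L}
    (hy : y ∈ span R t) : ⁅x, y⁆ ∈ span R t := by
  obtain ⟨a, ha, b, hb, rfl⟩ := mem_sup.mp (htop ▸ mem_top : x ∈ span R s ⊔ span R t)
  rw [add_lie]
  exact add_mem (lie_mem_of_mem_span hst ha hy) (htt b hb y hy)

theorem lie_mem_of_sup_eq_top {s : Set L} {p : Submodule R L} (htop : span R s ⊔ p = ⊤)
    (hs : ∀ x ∈ s, ∀ y ∈ s, ⁅x, y⁆ ∈ p) (hp : ∀ x : L, ∀ y ∈ p, ⁅x, y⁆ ∈ p) (x y : L) :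
    ⁅x, y⁆ ∈ p := by
  have hdecomp : ∀ w : L, ∃ a ∈ span R s, ∃ b ∈ p, a + b = w := fun w =>
    mem_sup.mp (htop ▸ mem_top)
  obtain ⟨a, ha, b, hb, rfl⟩ := hdecomp x
  obtain ⟨a', ha', b', hb', rfl⟩ := hdecomp y
  have hpl : ∀ w, ∀ u ∈ p, ⁅u, w⁆ ∈ p := fun w u hu => by
    rw [← lie_skew]; exact neg_mem (hp w u hu)
  rw [lie_add, add_lie]
  exact add_mem (add_mem (lie_mem_of_mem_span hs ha ha') (hpl a' b hb)) (hp _ b' hb')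

theorem derivedSeries_succ_le {p : Submodule R L} {k : ℕ}
    (h : ∀ x ∈ derivedSeries R L k, ∀ y ∈ derivedSeries R L k, ⁅x, y⁆ ∈ p) :
    (derivedSeries R L (k + 1)).toSubmodule ≤ p := by
  rw [derivedSeries_def, derivedSeriesOfIdeal_succ, ← derivedSeries_def,
    LieSubmodule.lieIdeal_oper_eq_linear_span', span_le]
  rintro _ ⟨x, hx, y, hy, rfl⟩
  exact h x hx y hy

theorem isSolvable_of_lie_mem_span_singleton {p : Submodule R L} {z : L}
    (hp : ∀ x y : L, ⁅x, y⁆ ∈ p) (hpz : ∀ x ∈ p, ∀ y ∈ p, ⁅x, y⁆ ∈ R ∙ z) : IsSolvable L := by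
  have h1 : (derivedSeries R L 1).toSubmodule ≤ p := derivedSeries_succ_le fun x _ y _ => hp x y
  have h2 : (derivedSeries R L 2).toSubmodule ≤ R ∙ z :=
    derivedSeries_succ_le fun x hx y hy => hpz x (h1 hx) y (h1 hy)
  have h3 : (derivedSeries R L 3).toSubmodule ≤ ⊥ := derivedSeries_succ_le fun x hx y hy =>
    lie_mem_of_mem_span (s := {z}) (t := {z}) (by simp) (h2 hx) (h2 hy)
  exact IsSolvable.mk (R := R) (k := 3) (by simpa using h3)

end LieBracketOnSpans

section Heisenberg

variable {R L : Type*} [CommRing R] [LieRing L] [LieAlgebra R L]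

def HeisenbergRelations (p₁ p₂ q₁ q₂ z : L) : Prop :=
  ⁅p₁, q₁⁆ = z ∧ ⁅p₂, q₂⁆ = z ∧ ⁅p₁, p₂⁆ = 0 ∧ ⁅p₁, q₂⁆ = 0 ∧ ⁅p₁, z⁆ = 0 ∧
    ⁅p₂, q₁⁆ = 0 ∧ ⁅p₂, z⁆ = 0 ∧ ⁅q₁, q₂⁆ = 0 ∧ ⁅q₁, z⁆ = 0 ∧ ⁅q₂, z⁆ = 0

namespace HeisenbergRelations

variable {p₁ p₂ q₁ q₂ z : L}

theorem lie_eq (h : HeisenbergRelations p₁ p₂ q₁ q₂ z) (a b c d e a' b' c' d' e' : R) :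
    ⁅a • p₁ + b • p₂ + c • q₁ + d • q₂ + e • z, a' • p₁ + b' • p₂ + c' • q₁ + d' • q₂ + e' • z⁆ =
      (a * c' - c * a' + b * d' - d * b') • z := by
  obtain ⟨h₁, h₂, h₃, h₄, h₅, h₆, h₇, h₈, h₉, h₁₀⟩ := h
  simp only [add_lie, lie_add, smul_lie, lie_smul, lie_self, ← lie_skew p₂ p₁, ← lie_skew q₁ p₁,
    ← lie_skew q₁ p₂, ← lie_skew q₂ p₁, ← lie_skew q₂ p₂, ← lie_skew q₂ q₁, ← lie_skew z p₁,
    ← lie_skew z p₂, ← lie_skew z q₁, ← lie_skew z q₂, h₁, h₂, h₃, h₄, h₅, h₆, h₇, h₈, h₉, h₁₀]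
  module

theorem lie_mem_span_singleton (h : HeisenbergRelations p₁ p₂ q₁ q₂ z) {x y : L}
    (hx : x ∈ span R {p₁, p₂, q₁, q₂, z}) (hy : y ∈ span R {p₁, p₂, q₁, q₂, z}) :
    ⁅x, y⁆ ∈ R ∙ z := by
  obtain ⟨a, b, c, d, e, rfl⟩ := mem_span_five_iff.mp hx
  obtain ⟨a', b', c', d', e', rfl⟩ := mem_span_five_iff.mp hy
  rw [h.lie_eq]
  exact smul_mem _ _ (mem_span_singleton_self z)

theorem forall_lie_eq_zero_iff {K L : Type*} [Field K] [LieRing L] [LieAlgebra K L]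
    {p₁ p₂ q₁ q₂ z : L} (h : HeisenbergRelations p₁ p₂ q₁ q₂ z) (hz : z ≠ 0) {y : L}
    (hy : y ∈ span K {p₁, p₂, q₁, q₂, z}) :
    (∀ x ∈ span K {p₁, p₂, q₁, q₂, z}, ⁅x, y⁆ = 0) ↔ y ∈ K ∙ z := by
  constructor
  · intro hcen
    obtain ⟨a', b', c', d', e', rfl⟩ := mem_span_five_iff.mp hy
    have hform : ∀ a b c d e : K, a * c' - c * a' + b * d' - d * b' = 0 := fun a b c d e => by
      have := hcen _ (mem_span_five_iff.mpr ⟨a, b, c, d, e, rfl⟩)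
      rwa [h.lie_eq, smul_eq_zero, or_iff_left hz] at this
    have hc' : c' = 0 := by simpa using hform 1 0 0 0 0
    have hd' : d' = 0 := by simpa using hform 0 1 0 0 0
    have ha' : a' = 0 := by simpa using hform 0 0 1 0 0
    have hb' : b' = 0 := by simpa using hform 0 0 0 1 0
    simpa [ha', hb', hc', hd'] using smul_mem _ e' (mem_span_singleton_self z)
  · intro hyz x hx
    obtain ⟨a, b, c, d, e, rfl⟩ := mem_span_five_iff.mp hx
    obtain ⟨t, rfl⟩ := mem_span_singleton.mp hyz
    have ht : t • z = (0 : K) • p₁ + (0 : K) • p₂ + (0 : K) • q₁ + (0 : K) • q₂ + t • z := by simp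
    rw [ht, h.lie_eq]
    simp

end HeisenbergRelations

end Heisenberg

theorem N7_table_defines_solvable_lie_algebra (c : ℂ)
    {F : Type*} [LieRing F] [LieAlgebra ℂ F]
    (T N X1 X2 X3 X4 X5 : F)
    (hbindep : LinearIndependent ℂ ![T, N, X1, X2, X3, X4, X5])
    (hbspan : Submodule.span ℂ (Set.range ![T, N, X1, X2, X3, X4, X5]) = ⊤)
    (hb01 : ⁅T, N⁆ = -N)
    (hb02 : ⁅T, X1⁆ = 0)
    (hb03 : ⁅T, X2⁆ = -X2)
    (hb04 : ⁅T, X3⁆ = -X3)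
    (hb05 : ⁅T, X4⁆ = -X4)
    (hb06 : ⁅T, X5⁆ = (-2 : ℂ) • X5)
    (hb12 : ⁅N, X1⁆ = X2)
    (hb13 : ⁅N, X2⁆ = 0)
    (hb14 : ⁅N, X3⁆ = 0)
    (hb15 : ⁅N, X4⁆ = -X5)
    (hb16 : ⁅N, X5⁆ = 0)
    (hb23 : ⁅X1, X2⁆ = (-(3*c)) • N + (-2 : ℂ) • X3)
    (hb24 : ⁅X1, X3⁆ = (-(2*c)) • X2 + (3 : ℂ) • X4)
    (hb25 : ⁅X1, X4⁆ = -N + (c) • X3)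
    (hb26 : ⁅X1, X5⁆ = 0)
    (hb34 : ⁅X2, X3⁆ = (-3 : ℂ) • X5)
    (hb35 : ⁅X2, X4⁆ = 0)
    (hb36 : ⁅X2, X5⁆ = 0)
    (hb45 : ⁅X3, X4⁆ = 0)
    (hb46 : ⁅X3, X5⁆ = 0)
    (hb56 : ⁅X4, X5⁆ = 0) :
    (∀ x y z : Fin 7 → ℂ,
      n7br c x (n7br c y z) + n7br c y (n7br c z x) + n7br c z (n7br c x y) = 0) ∧
    LieAlgebra.IsSolvable F ∧
    (∀ x : F, ∀ y ∈ (Submodule.span ℂ ({N, X2, X3, X4, X5} : Set F)), ⁅x, y⁆ ∈ (Submodule.span ℂ ({N, X2, X3, X4, X5} : Set F))) ∧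
    (∃ p1 p2 q1 q2 z : F,
      Submodule.span ℂ ({p1, p2, q1, q2, z} : Set F) = (Submodule.span ℂ ({N, X2, X3, X4, X5} : Set F)) ∧
      LinearIndependent ℂ ![p1, p2, q1, q2, z] ∧
      ⁅p1, q1⁆ = z ∧ ⁅p2, q2⁆ = z ∧ ⁅p1, p2⁆ = 0 ∧ ⁅p1, q2⁆ = 0 ∧ ⁅p1, z⁆ = 0 ∧
      ⁅p2, q1⁆ = 0 ∧ ⁅p2, z⁆ = 0 ∧ ⁅q1, q2⁆ = 0 ∧ ⁅q1, z⁆ = 0 ∧ ⁅q2, z⁆ = 0) ∧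
    (∀ y ∈ (Submodule.span ℂ ({N, X2, X3, X4, X5} : Set F)),
      ((∀ x ∈ (Submodule.span ℂ ({N, X2, X3, X4, X5} : Set F)), ⁅x, y⁆ = 0) ↔ y ∈ Submodule.span ℂ ({X5} : Set F))) ∧
    ⁅T, X1⁆ = 0 ∧
    Submodule.span ℂ ({T, X1} : Set F) ⊔ (Submodule.span ℂ ({N, X2, X3, X4, X5} : Set F)) = ⊤ ∧
    Submodule.span ℂ ({T, X1} : Set F) ⊓ (Submodule.span ℂ ({N, X2, X3, X4, X5} : Set F)) = ⊥ := by
  set I := span ℂ ({N, X2, X3, X4, X5} : Set F)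
  have hcompl : IsCompl (span ℂ ({T, X1} : Set F)) I :=
    isCompl_span_pair_span_five hbindep hbspan
  have hheis : HeisenbergRelations N X2 (-X4) ((-1/3 : ℂ) • X3) X5 := by
    refine ⟨?_, ?_, ?_, ?_, ?_, ?_, ?_, ?_, ?_, ?_⟩ <;>
      simp [hb13, hb14, hb15, hb16, hb34, hb35, hb36, hb46, hb56, ← lie_skew X4 X3, hb45,
        smul_smul]
  have hheisSpan : span ℂ {N, X2, -X4, (-1/3 : ℂ) • X3, X5} = I := by
    have hneg : ℂ ∙ (-X4) = ℂ ∙ X4 := by rw [← Set.neg_singleton, span_neg]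
    have hsmul : ℂ ∙ ((-1/3 : ℂ) • X3) = ℂ ∙ X3 := span_singleton_smul_eq (by norm_num) X3
    simp only [I, span_insert, hneg, hsmul, sup_left_comm (ℂ ∙ X4)]
  have hheisIndep : LinearIndependent ℂ ![N, X2, -X4, (-1/3 : ℂ) • X3, X5] := by
    convert (hbindep.comp ![1, 3, 5, 4, 6] (by decide)).units_smul
      ![1, 1, -1, Units.mk0 (-1/3) (by norm_num), 1] using 1
    funext i
    fin_cases i <;> simp
  have hII : ∀ x ∈ I, ∀ y ∈ I, ⁅x, y⁆ ∈ ℂ ∙ X5 := fun x hx y hy =>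
    hheis.lie_mem_span_singleton (hheisSpan ▸ hx) (hheisSpan ▸ hy)
  have hideal : ∀ x : F, ∀ y ∈ I, ⁅x, y⁆ ∈ I := by
    refine lie_mem_span_of_sup_eq_top hcompl.codisjoint.eq_top ?_
      (fun x hx y hy => span_mono (by simp) (hII x hx y hy))
    simp only [Set.mem_insert_iff, Set.mem_singleton_iff, forall_eq_or_imp, forall_eq,
      hb01, hb03, hb04, hb05, hb06, ← lie_skew X1 N, hb12, hb23, hb24, hb25, hb26]
    -- the side conditions nest `add_mem` → `smul_mem` → `mem_span_of_mem`
    simp (maxDischargeDepth := 4) [add_mem, smul_mem, mem_span_of_mem]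
  have hderived : ∀ x y : F, ⁅x, y⁆ ∈ I := by
    refine lie_mem_of_sup_eq_top hcompl.codisjoint.eq_top ?_ hideal
    simp [hb02, ← lie_skew X1 T]
  have hX5 : X5 ≠ 0 := by simpa using hbindep.ne_zero 6
  exact ⟨n7br_jacobi c, isSolvable_of_lie_mem_span_singleton hderived hII, hideal,
    ⟨N, X2, -X4, (-1/3 : ℂ) • X3, X5, hheisSpan, hheisIndep, hheis⟩,
    fun y hy => hheisSpan ▸ hheis.forall_lie_eq_zero_iff hX5 (hheisSpan ▸ hy), hb02,
    hcompl.codisjoint.eq_top, hcompl.disjoint.eq_bot⟩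
end

section
/- (Corollary: the flat limiting case b = 0 of the type D analysis.) For every a ∈ ℂ, the elements T := −Z1+2Z2, X1 := f10 + a·e11, X2 := f11 + a·e10, X3 := f21 + a²·e21, X4 := f31 + a³·e32, X5 := f32 + a³·e31 of 𝔤 span a 6-dimensional Lie subalgebra of 𝔤, with brackets [T,X1]=X1, [T,X2]=−X2, [T,X3]=0, [T,X4]=X4, [T,X5]=−X5, [X1,X2]=3aT−2X3, [X1,X3]=2aX1+3X4, [X1,X4]=0, [X1,X5]=−aX3, [X2,X3]=−2aX2−3X5, [X2,X4]=aX3, [X2,X5]=0, [X3,X4]=−a²X1, [X3,X5]=a²X2, [X4,X5]=a³T. -/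
set_option maxHeartbeats 1000000

theorem flat_D6_limit_subalgebra
    {g : Type*} [LieRing g] [LieAlgebra ℂ g]
    (Z1 Z2 e01 e10 e11 e21 e31 e32 f01 f10 f11 f21 f31 f32 : g)
    (hindep : LinearIndependent ℂ ![Z1, Z2, e01, e10, e11, e21, e31, e32, f01, f10, f11, f21, f31, f32])
    (hspan : Submodule.span ℂ (Set.range ![Z1, Z2, e01, e10, e11, e21, e31, e32, f01, f10, f11, f21, f31, f32]) = ⊤)
    (hZ1Z2 : ⁅Z1, Z2⁆ = 0)
    (hZ1e01 : ⁅Z1, e01⁆ = 0)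
    (hZ1e10 : ⁅Z1, e10⁆ = e10)
    (hZ1e11 : ⁅Z1, e11⁆ = e11)
    (hZ1e21 : ⁅Z1, e21⁆ = (2 : ℂ) • e21)
    (hZ1e31 : ⁅Z1, e31⁆ = (3 : ℂ) • e31)
    (hZ1e32 : ⁅Z1, e32⁆ = (3 : ℂ) • e32)
    (hZ1f01 : ⁅Z1, f01⁆ = 0)
    (hZ1f10 : ⁅Z1, f10⁆ = -f10)
    (hZ1f11 : ⁅Z1, f11⁆ = -f11)
    (hZ1f21 : ⁅Z1, f21⁆ = (-2 : ℂ) • f21)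
    (hZ1f31 : ⁅Z1, f31⁆ = (-3 : ℂ) • f31)
    (hZ1f32 : ⁅Z1, f32⁆ = (-3 : ℂ) • f32)
    (hZ2e01 : ⁅Z2, e01⁆ = e01)
    (hZ2e10 : ⁅Z2, e10⁆ = 0)
    (hZ2e11 : ⁅Z2, e11⁆ = e11)
    (hZ2e21 : ⁅Z2, e21⁆ = e21)
    (hZ2e31 : ⁅Z2, e31⁆ = e31)
    (hZ2e32 : ⁅Z2, e32⁆ = (2 : ℂ) • e32)
    (hZ2f01 : ⁅Z2, f01⁆ = -f01)
    (hZ2f10 : ⁅Z2, f10⁆ = 0)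
    (hZ2f11 : ⁅Z2, f11⁆ = -f11)
    (hZ2f21 : ⁅Z2, f21⁆ = -f21)
    (hZ2f31 : ⁅Z2, f31⁆ = -f31)
    (hZ2f32 : ⁅Z2, f32⁆ = (-2 : ℂ) • f32)
    (he01e10 : ⁅e01, e10⁆ = -e11)
    (he01e11 : ⁅e01, e11⁆ = 0)
    (he01e21 : ⁅e01, e21⁆ = 0)
    (he01e31 : ⁅e01, e31⁆ = e32)
    (he01e32 : ⁅e01, e32⁆ = 0)
    (he01f01 : ⁅e01, f01⁆ = -Z1 + (2 : ℂ) • Z2)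
    (he01f10 : ⁅e01, f10⁆ = 0)
    (he01f11 : ⁅e01, f11⁆ = f10)
    (he01f21 : ⁅e01, f21⁆ = 0)
    (he01f31 : ⁅e01, f31⁆ = 0)
    (he01f32 : ⁅e01, f32⁆ = -f31)
    (he10e11 : ⁅e10, e11⁆ = (2 : ℂ) • e21)
    (he10e21 : ⁅e10, e21⁆ = (-3 : ℂ) • e31)
    (he10e31 : ⁅e10, e31⁆ = 0)
    (he10e32 : ⁅e10, e32⁆ = 0)
    (he10f01 : ⁅e10, f01⁆ = 0)
    (he10f10 : ⁅e10, f10⁆ = (2 : ℂ) • Z1 + (-3 : ℂ) • Z2)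
    (he10f11 : ⁅e10, f11⁆ = (-3 : ℂ) • f01)
    (he10f21 : ⁅e10, f21⁆ = (-2 : ℂ) • f11)
    (he10f31 : ⁅e10, f31⁆ = f21)
    (he10f32 : ⁅e10, f32⁆ = 0)
    (he11e21 : ⁅e11, e21⁆ = (3 : ℂ) • e32)
    (he11e31 : ⁅e11, e31⁆ = 0)
    (he11e32 : ⁅e11, e32⁆ = 0)
    (he11f01 : ⁅e11, f01⁆ = e10)
    (he11f10 : ⁅e11, f10⁆ = (-3 : ℂ) • e01)
    (he11f11 : ⁅e11, f11⁆ = -Z1 + (3 : ℂ) • Z2)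
    (he11f21 : ⁅e11, f21⁆ = (2 : ℂ) • f10)
    (he11f31 : ⁅e11, f31⁆ = 0)
    (he11f32 : ⁅e11, f32⁆ = -f21)
    (he21e31 : ⁅e21, e31⁆ = 0)
    (he21e32 : ⁅e21, e32⁆ = 0)
    (he21f01 : ⁅e21, f01⁆ = 0)
    (he21f10 : ⁅e21, f10⁆ = (-2 : ℂ) • e11)
    (he21f11 : ⁅e21, f11⁆ = (2 : ℂ) • e10)
    (he21f21 : ⁅e21, f21⁆ = Z1)
    (he21f31 : ⁅e21, f31⁆ = -f10)
    (he21f32 : ⁅e21, f32⁆ = f11)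
    (he31e32 : ⁅e31, e32⁆ = 0)
    (he31f01 : ⁅e31, f01⁆ = 0)
    (he31f10 : ⁅e31, f10⁆ = e21)
    (he31f11 : ⁅e31, f11⁆ = 0)
    (he31f21 : ⁅e31, f21⁆ = -e10)
    (he31f31 : ⁅e31, f31⁆ = Z1 + -Z2)
    (he31f32 : ⁅e31, f32⁆ = f01)
    (he32f01 : ⁅e32, f01⁆ = -e31)
    (he32f10 : ⁅e32, f10⁆ = 0)
    (he32f11 : ⁅e32, f11⁆ = -e21)
    (he32f21 : ⁅e32, f21⁆ = e11)
    (he32f31 : ⁅e32, f31⁆ = e01)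
    (he32f32 : ⁅e32, f32⁆ = Z2)
    (hf01f10 : ⁅f01, f10⁆ = f11)
    (hf01f11 : ⁅f01, f11⁆ = 0)
    (hf01f21 : ⁅f01, f21⁆ = 0)
    (hf01f31 : ⁅f01, f31⁆ = -f32)
    (hf01f32 : ⁅f01, f32⁆ = 0)
    (hf10f11 : ⁅f10, f11⁆ = (-2 : ℂ) • f21)
    (hf10f21 : ⁅f10, f21⁆ = (3 : ℂ) • f31)
    (hf10f31 : ⁅f10, f31⁆ = 0)
    (hf10f32 : ⁅f10, f32⁆ = 0)
    (hf11f21 : ⁅f11, f21⁆ = (-3 : ℂ) • f32)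
    (hf11f31 : ⁅f11, f31⁆ = 0)
    (hf11f32 : ⁅f11, f32⁆ = 0)
    (hf21f31 : ⁅f21, f31⁆ = 0)
    (hf21f32 : ⁅f21, f32⁆ = 0)
    (hf31f32 : ⁅f31, f32⁆ = 0)
    (a : ℂ) (T X1 X2 X3 X4 X5 : g)
    (hT : T = -Z1 + (2 : ℂ) • Z2)
    (hX1 : X1 = f10 + a • e11)
    (hX2 : X2 = f11 + a • e10)
    (hX3 : X3 = f21 + a ^ 2 • e21)
    (hX4 : X4 = f31 + a ^ 3 • e32)
    (hX5 : X5 = f32 + a ^ 3 • e31) :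
    LinearIndependent ℂ ![T, X1, X2, X3, X4, X5] ∧
    (∀ x ∈ (Submodule.span ℂ ({T, X1, X2, X3, X4, X5} : Set g)), ∀ y ∈ (Submodule.span ℂ ({T, X1, X2, X3, X4, X5} : Set g)), ⁅x, y⁆ ∈ (Submodule.span ℂ ({T, X1, X2, X3, X4, X5} : Set g))) ∧
    (⁅T, X1⁆ = X1) ∧
    (⁅T, X2⁆ = -X2) ∧
    (⁅T, X3⁆ = 0) ∧
    (⁅T, X4⁆ = X4) ∧
    (⁅T, X5⁆ = -X5) ∧
    (⁅X1, X2⁆ = (3*a) • T + (-2 : ℂ) • X3) ∧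
    (⁅X1, X3⁆ = (2*a) • X1 + (3 : ℂ) • X4) ∧
    (⁅X1, X4⁆ = 0) ∧
    (⁅X1, X5⁆ = (-a) • X3) ∧
    (⁅X2, X3⁆ = (-(2*a)) • X2 + (-3 : ℂ) • X5) ∧
    (⁅X2, X4⁆ = (a) • X3) ∧
    (⁅X2, X5⁆ = 0) ∧
    (⁅X3, X4⁆ = (-a^2) • X1) ∧
    (⁅X3, X5⁆ = (a^2) • X2) ∧
    (⁅X4, X5⁆ = (a^3) • T) := by
  have rf10e10 : ⁅f10, e10⁆ = -((2 : ℂ) • Z1 + (-3 : ℂ) • Z2) := by rw [← lie_skew, he10f10]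
  have re11e10 : ⁅e11, e10⁆ = -((2 : ℂ) • e21) := by rw [← lie_skew, he10e11]
  have rf10e21 : ⁅f10, e21⁆ = -((-2 : ℂ) • e11) := by rw [← lie_skew, he21f10]
  have rf10e32 : ⁅f10, e32⁆ = -(0) := by rw [← lie_skew, he32f10]
  have rf10e31 : ⁅f10, e31⁆ = -(e21) := by rw [← lie_skew, he31f10]
  have rf11e21 : ⁅f11, e21⁆ = -((2 : ℂ) • e10) := by rw [← lie_skew, he21f11]
  have rf11e32 : ⁅f11, e32⁆ = -(-e21) := by rw [← lie_skew, he32f11]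
  have rf11e31 : ⁅f11, e31⁆ = -(0) := by rw [← lie_skew, he31f11]
  have rf21e32 : ⁅f21, e32⁆ = -(e11) := by rw [← lie_skew, he32f21]
  have rf21e31 : ⁅f21, e31⁆ = -(-e10) := by rw [← lie_skew, he31f21]
  have rf31e31 : ⁅f31, e31⁆ = -(Z1 + -Z2) := by rw [← lie_skew, he31f31]
  have re32e31 : ⁅e32, e31⁆ = -(0) := by rw [← lie_skew, he31e32]
  have b01 : ⁅T, X1⁆ = X1 := by
    simp only [hT, hX1, hX2, hX3, hX4, hX5]
    simp only [add_lie, lie_add, smul_lie, lie_smul, neg_lie, lie_neg, hZ1e11, hZ1f10, hZ2e11, hZ2f10]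
    module
  have b02 : ⁅T, X2⁆ = -X2 := by
    simp only [hT, hX1, hX2, hX3, hX4, hX5]
    simp only [add_lie, lie_add, smul_lie, lie_smul, neg_lie, lie_neg, hZ1e10, hZ1f11, hZ2e10, hZ2f11]
    module
  have b03 : ⁅T, X3⁆ = (0:g) := by
    simp only [hT, hX1, hX2, hX3, hX4, hX5]
    simp only [add_lie, lie_add, smul_lie, lie_smul, neg_lie, lie_neg, hZ1e21, hZ1f21, hZ2e21, hZ2f21]
    module
  have b04 : ⁅T, X4⁆ = X4 := by
    simp only [hT, hX1, hX2, hX3, hX4, hX5]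
    simp only [add_lie, lie_add, smul_lie, lie_smul, neg_lie, lie_neg, hZ1e32, hZ1f31, hZ2e32, hZ2f31]
    module
  have b05 : ⁅T, X5⁆ = -X5 := by
    simp only [hT, hX1, hX2, hX3, hX4, hX5]
    simp only [add_lie, lie_add, smul_lie, lie_smul, neg_lie, lie_neg, hZ1e31, hZ1f32, hZ2e31, hZ2f32]
    module
  have b12 : ⁅X1, X2⁆ = (3*a) • T + (-2 : ℂ) • X3 := by
    simp only [hT, hX1, hX2, hX3, hX4, hX5]
    simp only [add_lie, lie_add, smul_lie, lie_smul, neg_lie, lie_neg, he11f11, hf10f11, re11e10, rf10e10]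
    module
  have b13 : ⁅X1, X3⁆ = (2*a) • X1 + (3 : ℂ) • X4 := by
    simp only [hT, hX1, hX2, hX3, hX4, hX5]
    simp only [add_lie, lie_add, smul_lie, lie_smul, neg_lie, lie_neg, he11e21, he11f21, hf10f21, rf10e21]
    module
  have b14 : ⁅X1, X4⁆ = (0:g) := by
    simp only [hT, hX1, hX2, hX3, hX4, hX5]
    simp only [add_lie, lie_add, smul_lie, lie_smul, neg_lie, lie_neg, he11e32, he11f31, hf10f31, rf10e32]
    module
  have b15 : ⁅X1, X5⁆ = (-a) • X3 := by
    simp only [hT, hX1, hX2, hX3, hX4, hX5]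
    simp only [add_lie, lie_add, smul_lie, lie_smul, neg_lie, lie_neg, he11e31, he11f32, hf10f32, rf10e31]
    module
  have b23 : ⁅X2, X3⁆ = (-(2*a)) • X2 + (-3 : ℂ) • X5 := by
    simp only [hT, hX1, hX2, hX3, hX4, hX5]
    simp only [add_lie, lie_add, smul_lie, lie_smul, neg_lie, lie_neg, he10e21, he10f21, hf11f21, rf11e21]
    module
  have b24 : ⁅X2, X4⁆ = (a) • X3 := by
    simp only [hT, hX1, hX2, hX3, hX4, hX5]
    simp only [add_lie, lie_add, smul_lie, lie_smul, neg_lie, lie_neg, he10e32, he10f31, hf11f31, rf11e32]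
    module
  have b25 : ⁅X2, X5⁆ = (0:g) := by
    simp only [hT, hX1, hX2, hX3, hX4, hX5]
    simp only [add_lie, lie_add, smul_lie, lie_smul, neg_lie, lie_neg, he10e31, he10f32, hf11f32, rf11e31]
    module
  have b34 : ⁅X3, X4⁆ = (-a^2) • X1 := by
    simp only [hT, hX1, hX2, hX3, hX4, hX5]
    simp only [add_lie, lie_add, smul_lie, lie_smul, neg_lie, lie_neg, he21e32, he21f31, hf21f31, rf21e32]
    module
  have b35 : ⁅X3, X5⁆ = (a^2) • X2 := by
    simp only [hT, hX1, hX2, hX3, hX4, hX5]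
    simp only [add_lie, lie_add, smul_lie, lie_smul, neg_lie, lie_neg, he21e31, he21f32, hf21f32, rf21e31]
    module
  have b45 : ⁅X4, X5⁆ = (a^3) • T := by
    simp only [hT, hX1, hX2, hX3, hX4, hX5]
    simp only [add_lie, lie_add, smul_lie, lie_smul, neg_lie, lie_neg, he32f32, hf31f32, re32e31, rf31e31]
    module
  have hli : LinearIndependent ℂ ![T, X1, X2, X3, X4, X5] := by
    rw [Fintype.linearIndependent_iff]
    intro c hc
    have e0 : (![T,X1,X2,X3,X4,X5] : Fin 6 → g) 0 = T := rfl
    have e1 : (![T,X1,X2,X3,X4,X5] : Fin 6 → g) 1 = X1 := rfl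
    have e2 : (![T,X1,X2,X3,X4,X5] : Fin 6 → g) 2 = X2 := rfl
    have e3 : (![T,X1,X2,X3,X4,X5] : Fin 6 → g) 3 = X3 := rfl
    have e4 : (![T,X1,X2,X3,X4,X5] : Fin 6 → g) 4 = X4 := rfl
    have e5 : (![T,X1,X2,X3,X4,X5] : Fin 6 → g) 5 = X5 := rfl
    simp only [Fin.sum_univ_six, e0, e1, e2, e3, e4, e5] at hc
    rw [hT, hX1, hX2, hX3, hX4, hX5] at hc
    have hd : ∑ i, (![-(c 0), 2*c 0, 0, a*c 2, a*c 1, a^2*c 3, a^3*c 5, a^3*c 4, 0,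
        c 1, c 2, c 3, c 4, c 5] : Fin 14 → ℂ) i • ![Z1, Z2, e01, e10, e11, e21, e31, e32, f01, f10, f11, f21, f31, f32] i = 0 := by
      simp [Fin.sum_univ_succ]
      linear_combination (norm := module) hc
    have H14 := Fintype.linearIndependent_iff.mp hindep _ hd
    intro i
    fin_cases i
    · simpa using H14 0
    · simpa using H14 9
    · simpa using H14 10
    · simpa using H14 11
    · simpa using H14 12
    · simpa using H14 13
  have m0 : T ∈ Submodule.span ℂ ({T, X1, X2, X3, X4, X5} : Set g) := Submodule.subset_span (by simp)
  have m1 : X1 ∈ Submodule.span ℂ ({T, X1, X2, X3, X4, X5} : Set g) := Submodule.subset_span (by simp)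
  have m2 : X2 ∈ Submodule.span ℂ ({T, X1, X2, X3, X4, X5} : Set g) := Submodule.subset_span (by simp)
  have m3 : X3 ∈ Submodule.span ℂ ({T, X1, X2, X3, X4, X5} : Set g) := Submodule.subset_span (by simp)
  have m4 : X4 ∈ Submodule.span ℂ ({T, X1, X2, X3, X4, X5} : Set g) := Submodule.subset_span (by simp)
  have m5 : X5 ∈ Submodule.span ℂ ({T, X1, X2, X3, X4, X5} : Set g) := Submodule.subset_span (by simp)
  have hcl : ∀ x ∈ Submodule.span ℂ ({T, X1, X2, X3, X4, X5} : Set g),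
      ∀ y ∈ Submodule.span ℂ ({T, X1, X2, X3, X4, X5} : Set g),
      ⁅x, y⁆ ∈ Submodule.span ℂ ({T, X1, X2, X3, X4, X5} : Set g) := by
    intro x hx y hy
    induction hx using Submodule.span_induction with
    | mem u hu =>
      induction hy using Submodule.span_induction with
      | mem v hv =>
        simp only [Set.mem_insert_iff, Set.mem_singleton_iff] at hu hv
        rcases hu with rfl | rfl | rfl | rfl | rfl | rfl
        · rcases hv with rfl | rfl | rfl | rfl | rfl | rfl
          · rw [lie_self]; exact zero_mem _
          · rw [b01]; exact m1
          · rw [b02]; exact neg_mem m2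
          · rw [b03]; exact zero_mem _
          · rw [b04]; exact m4
          · rw [b05]; exact neg_mem m5
        · rcases hv with rfl | rfl | rfl | rfl | rfl | rfl
          · rw [← lie_skew, b01]; exact neg_mem (m1)
          · rw [lie_self]; exact zero_mem _
          · rw [b12]; exact add_mem (Submodule.smul_mem _ _ m0) (Submodule.smul_mem _ _ m3)
          · rw [b13]; exact add_mem (Submodule.smul_mem _ _ m1) (Submodule.smul_mem _ _ m4)
          · rw [b14]; exact zero_mem _
          · rw [b15]; exact Submodule.smul_mem _ _ m3
        · rcases hv with rfl | rfl | rfl | rfl | rfl | rfl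
          · rw [← lie_skew, b02]; exact neg_mem (neg_mem m2)
          · rw [← lie_skew, b12]; exact neg_mem (add_mem (Submodule.smul_mem _ _ m0) (Submodule.smul_mem _ _ m3))
          · rw [lie_self]; exact zero_mem _
          · rw [b23]; exact add_mem (Submodule.smul_mem _ _ m2) (Submodule.smul_mem _ _ m5)
          · rw [b24]; exact Submodule.smul_mem _ _ m3
          · rw [b25]; exact zero_mem _
        · rcases hv with rfl | rfl | rfl | rfl | rfl | rfl
          · rw [← lie_skew, b03]; exact neg_mem (zero_mem _)
          · rw [← lie_skew, b13]; exact neg_mem (add_mem (Submodule.smul_mem _ _ m1) (Submodule.smul_mem _ _ m4))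
          · rw [← lie_skew, b23]; exact neg_mem (add_mem (Submodule.smul_mem _ _ m2) (Submodule.smul_mem _ _ m5))
          · rw [lie_self]; exact zero_mem _
          · rw [b34]; exact Submodule.smul_mem _ _ m1
          · rw [b35]; exact Submodule.smul_mem _ _ m2
        · rcases hv with rfl | rfl | rfl | rfl | rfl | rfl
          · rw [← lie_skew, b04]; exact neg_mem (m4)
          · rw [← lie_skew, b14]; exact neg_mem (zero_mem _)
          · rw [← lie_skew, b24]; exact neg_mem (Submodule.smul_mem _ _ m3)
          · rw [← lie_skew, b34]; exact neg_mem (Submodule.smul_mem _ _ m1)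
          · rw [lie_self]; exact zero_mem _
          · rw [b45]; exact Submodule.smul_mem _ _ m0
        · rcases hv with rfl | rfl | rfl | rfl | rfl | rfl
          · rw [← lie_skew, b05]; exact neg_mem (neg_mem m5)
          · rw [← lie_skew, b15]; exact neg_mem (Submodule.smul_mem _ _ m3)
          · rw [← lie_skew, b25]; exact neg_mem (zero_mem _)
          · rw [← lie_skew, b35]; exact neg_mem (Submodule.smul_mem _ _ m2)
          · rw [← lie_skew, b45]; exact neg_mem (Submodule.smul_mem _ _ m0)
          · rw [lie_self]; exact zero_mem _
      | zero => simp only [lie_zero]; exact zero_mem _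
      | add v w _ _ h1 h2 => rw [lie_add]; exact add_mem h1 h2
      | smul t v _ h1 => rw [lie_smul]; exact Submodule.smul_mem _ _ h1
    | zero => simp only [zero_lie]; exact zero_mem _
    | add u w _ _ h1 h2 => rw [add_lie]; exact add_mem h1 h2
    | smul t u _ h1 => rw [smul_lie]; exact Submodule.smul_mem _ _ h1
  exact ⟨hli, hcl, b01, b02, b03, b04, b05, b12, b13, b14, b15, b23, b24, b25, b34, b35, b45⟩
end

section
/- (Cartan-theoretic identification of the generic rolling distribution.) Let ρ ∈ ℝ with ρ > 1 and ρ ≠ 3, let a ∈ ℂ satisfy a² = 4(ρ²+1)²/((ρ²−9)(ρ²−1/9)), and let s1 ∈ ℂ with s1 ≠ 0. In so(3,ℂ) ⊕ so(3,ℂ), set v0 = k1+k2, v1 = i1−ρ·i2, v2 = j1−ρ·j2, v3 = k1+ρ²·k2, v4 = j1−ρ³·j2, v5 = i1−ρ³·i2, and define T = i·v0, X1 = s1·(v1 + i·v2), X2 = s2·(v1 − i·v2), X3 = s3·v3 + t1·i·v0, X4 = s4·(v4 − i·v5) + t2·(v1 + i·v2), X5 = s5·(v4 + i·v5) + t3·(v1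 − i·v2), where s2 = −5a/(s1(ρ²+1)), s3 = −5ia/(ρ²+1), s4 = 5i·s1·a/(3(ρ²+1)), s5 = 25i·a²/(3·s1·(ρ²+1)²), t1 = (3/2)a, t2 = −(7/6)·a·s1, t3 = 35a²/(6·s1·(ρ²+1)). Then (T, X1, X2, X3, X4, X5) is a basis of so(3,ℂ) ⊕ so(3,ℂ), and the brackets of these elements are exactly those of the type D.6_a bracket table. -/
/-!
Over `ℂ`, `so(3)` is `sl₂`: for `[i, j] = k`, `[j, k] = i`, `[k, i] = j` the elements
`H = I • k`, `E = i + I • j`, `F = i - I • j` satisfy `[H, E] = E`, `[H, F] = -F`, `[E, F] = -2H`.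
In the resulting frame of `so(3, ℂ) ⊕ so(3, ℂ)` the elements `T, X1, …, X5` have sparse
coordinates: `T, X3` lie in the Cartan part, `X1, X4` in the `E`-directions and `X2, X5` in the
`F`-directions. Their brackets are therefore read off from the structure constants of
`sl₂ ⊕ sl₂`, and each table entry becomes a polynomial identity in `a, ρ, s1` modulo the relation
defining `a²`. The coordinate matrix splits into three `2 × 2` blocks with determinants non-zero
multiples of `a (1 - ρ²)`, `ρ a s1² (1 - ρ²)` and `ρ a³ (1 - ρ²) / s1²`, so the six elements form
a basis.
-/

open Complex

/-- `(H, E, F) = (h / 2, e, -f)` for a standard `sl₂`-triple `(h, e, f)`. -/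
structure IsSl2Basis {L : Type*} [LieRing L] (H E F : L) : Prop where
  lie_h_e : ⁅H, E⁆ = E
  lie_h_f : ⁅H, F⁆ = -F
  lie_e_f : ⁅E, F⁆ = -(2 • H)

section

variable {R L : Type*} [CommRing R] [LieRing L] [LieAlgebra R L]

theorem IsSl2Basis.lie_comb {H E F : L} (hb : IsSl2Basis H E F) (h e f h' e' f' : R) :
    ⁅h • H + e • E + f • F, h' • H + e' • E + f' • F⁆ =
      (2 * (f * e' - e * f')) • H + (h * e' - e * h') • E + (f * h' - h * f') • F := by
  have hEH : ⁅E, H⁆ = -E := by rw [← lie_skew, hb.lie_h_e]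
  have hFH : ⁅F, H⁆ = F := by rw [← lie_skew, hb.lie_h_f, neg_neg]
  have hFE : ⁅F, E⁆ = 2 • H := by rw [← lie_skew, hb.lie_e_f, neg_neg]
  simp only [add_lie, lie_add, smul_lie, lie_smul, lie_self, hb.lie_h_e, hb.lie_h_f, hb.lie_e_f,
    hEH, hFH, hFE, smul_zero]
  module

theorem lie_add_add_of_lie_eq_zero {x₁ x₂ y₁ y₂ : L} (h₁₂ : ⁅x₁, y₂⁆ = 0) (h₂₁ : ⁅y₁, x₂⁆ = 0) :
    ⁅x₁ + x₂, y₁ + y₂⁆ = ⁅x₁, y₁⁆ + ⁅x₂, y₂⁆ := by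
  rw [add_lie, lie_add, lie_add, h₁₂, ← lie_skew x₂, h₂₁]
  abel

def sl2PairBracket (x y : Fin 6 → R) : Fin 6 → R :=
  ![2 * (x 2 * y 1 - x 1 * y 2), x 0 * y 1 - x 1 * y 0, x 2 * y 0 - x 0 * y 2,
    2 * (x 5 * y 4 - x 4 * y 5), x 3 * y 4 - x 4 * y 3, x 5 * y 3 - x 3 * y 5]

theorem lie_linearCombination_of_isSl2Basis {H₁ E₁ F₁ H₂ E₂ F₂ : L}
    (hb₁ : IsSl2Basis H₁ E₁ F₁) (hb₂ : IsSl2Basis H₂ E₂ F₂)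
    (hcomm : ∀ h e f h' e' f' : R, ⁅h • H₁ + e • E₁ + f • F₁, h' • H₂ + e' • E₂ + f' • F₂⁆ = 0)
    (x y : Fin 6 → R) :
    ⁅Fintype.linearCombination R ![H₁, E₁, F₁, H₂, E₂, F₂] x,
      Fintype.linearCombination R ![H₁, E₁, F₁, H₂, E₂, F₂] y⁆ =
      Fintype.linearCombination R ![H₁, E₁, F₁, H₂, E₂, F₂] (sl2PairBracket x y) := by
  have hcoord : ∀ z : Fin 6 → R, Fintype.linearCombination R ![H₁, E₁, F₁, H₂, E₂, F₂] z =
      (z 0 • H₁ + z 1 • E₁ + z 2 • F₁) + (z 3 • H₂ + z 4 • E₂ + z 5 • F₂) := fun z => by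
    simp only [Fintype.linearCombination_apply, Fin.sum_univ_six, Matrix.cons_val_zero,
      Matrix.cons_val_one, Matrix.cons_val, Fin.isValue]
    abel
  rw [hcoord, hcoord, hcoord, lie_add_add_of_lie_eq_zero (hcomm ..) (hcomm ..), hb₁.lie_comb,
    hb₂.lie_comb]
  simp [sl2PairBracket]

end

theorem isSl2Basis_of_so3 {L : Type*} [LieRing L] [LieAlgebra ℂ L] {i j k : L}
    (hij : ⁅i, j⁆ = k) (hik : ⁅i, k⁆ = -j) (hjk : ⁅j, k⁆ = i) :
    IsSl2Basis (I • k) (i + I • j) (i - I • j) := by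
  have hji : ⁅j, i⁆ = -k := by rw [← lie_skew, hij]
  have hki : ⁅k, i⁆ = j := by rw [← lie_skew, hik, neg_neg]
  have hkj : ⁅k, j⁆ = -i := by rw [← lie_skew, hjk]
  constructor <;>
  · simp only [add_lie, lie_add, lie_sub, smul_lie, lie_smul, lie_self, hij, hji, hki, hkj, smul_zero]
    match_scalars <;> grind [I_sq]

def IsD6Table {V : Type*} [AddCommGroup V] [Module ℂ V] (bracket : V → V → V) (a : ℂ)
    (X : Fin 6 → V) : Prop :=
  bracket (X 0) (X 1) = X 1 ∧ bracket (X 0) (X 2) = -X 2 ∧ bracket (X 0) (X 3) = 0 ∧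
    bracket (X 0) (X 4) = X 4 ∧ bracket (X 0) (X 5) = -X 5 ∧
    bracket (X 1) (X 2) = (3*a) • X 0 + (-2 : ℂ) • X 3 ∧
    bracket (X 1) (X 3) = (2*a) • X 1 + (3 : ℂ) • X 4 ∧
    bracket (X 1) (X 4) = 0 ∧
    bracket (X 1) (X 5) = (6 : ℂ) • X 0 + (-a) • X 3 ∧
    bracket (X 2) (X 3) = (-(2*a)) • X 2 + (-3 : ℂ) • X 5 ∧
    bracket (X 2) (X 4) = (-6 : ℂ) • X 0 + (a) • X 3 ∧
    bracket (X 2) (X 5) = 0 ∧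
    bracket (X 3) (X 4) = (-(a^2+3)) • X 1 ∧
    bracket (X 3) (X 5) = (a^2+3) • X 2 ∧
    bracket (X 4) (X 5) = (a*(a^2-1)) • X 0 + (-2 : ℂ) • X 3

theorem IsD6Table.map {V W : Type*} [AddCommGroup V] [Module ℂ V] [AddCommGroup W] [Module ℂ W]
    {brV : V → V → V} {brW : W → W → W} {a : ℂ} {X : Fin 6 → V} (h : IsD6Table brV a X)
    (f : V →ₗ[ℂ] W) (hf : ∀ x y, brW (f x) (f y) = f (brV x y)) : IsD6Table brW a (f ∘ X) := by
  obtain ⟨h1, h2, h3, h4, h5, h6, h7, h8, h9, h10, h11, h12, h13, h14, h15⟩ := h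
  simp only [IsD6Table, Function.comp_apply, hf, h1, h2, h3, h4, h5, h6, h7, h8, h9, h10, h11, h12,
    h13, h14, h15, map_add, map_smul, map_neg, map_zero, and_self]

noncomputable def rollingCoords (ρ a s : ℂ) : Fin 6 → Fin 6 → ℂ :=
  ![![1, 0, 0, 1, 0, 0],
    ![0, s, 0, 0, -ρ * s, 0],
    ![0, 0, -5 * a / (s * (ρ ^ 2 + 1)), 0, 0, 5 * ρ * a / (s * (ρ ^ 2 + 1))],
    ![3 * a / 2 - 5 * a / (ρ ^ 2 + 1), 0, 0, 3 * a / 2 - 5 * ρ ^ 2 * a / (ρ ^ 2 + 1), 0, 0],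
    ![0, -7 * a * s / 6 + 5 * a * s / (3 * (ρ ^ 2 + 1)), 0,
      0, 7 * ρ * a * s / 6 - 5 * ρ ^ 3 * a * s / (3 * (ρ ^ 2 + 1)), 0],
    ![0, 0, 35 * a ^ 2 / (6 * s * (ρ ^ 2 + 1)) - 25 * a ^ 2 / (3 * s * (ρ ^ 2 + 1) ^ 2),
      0, 0, -35 * ρ * a ^ 2 / (6 * s * (ρ ^ 2 + 1)) + 25 * ρ ^ 3 * a ^ 2 / (3 * s * (ρ ^ 2 + 1) ^ 2)]]

set_option maxHeartbeats 1000000 in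
theorem isD6Table_rollingCoords {ρ a s : ℂ} (hs : s ≠ 0) (hP : ρ ^ 2 + 1 ≠ 0)
    (ha : a ^ 2 * ((ρ ^ 2 - 9) * (ρ ^ 2 - 1 / 9)) = 4 * (ρ ^ 2 + 1) ^ 2) :
    IsD6Table sl2PairBracket a (rollingCoords ρ a s) := by
  replace ha : a ^ 2 * (9 * ρ ^ 4 - 82 * ρ ^ 2 + 9) = 36 * (ρ ^ 2 + 1) ^ 2 := by
    linear_combination 9 * ha
  refine ⟨?_, ?_, ?_, ?_, ?_, ?_, ?_, ?_, ?_, ?_, ?_, ?_, ?_, ?_, ?_⟩ <;> ext i <;> fin_cases i <;>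
    simp only [sl2PairBracket, rollingCoords, Matrix.cons_val, Matrix.cons_val_zero,
      Matrix.cons_val_one, Pi.add_apply, Pi.smul_apply, Pi.neg_apply,
      Pi.zero_apply, smul_eq_mul, Fin.isValue, Fin.zero_eta, Fin.mk_one, Fin.reduceFinMk] <;>
    -- after clearing denominators, a polynomial identity modulo `ha`
    field_simp <;> grind

theorem Submodule.mem_of_smul_add_smul_mem {K M : Type*} [Field K] [AddCommGroup M] [Module K M]
    {p : Submodule K M} {x y : M} {a b c d : K} (hdet : a * d - b * c ≠ 0)
    (h₁ : a • x + b • y ∈ p) (h₂ : c • x + d • y ∈ p) : x ∈ p ∧ y ∈ p := by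
  have hx : x = (a * d - b * c)⁻¹ • (d • (a • x + b • y) - b • (c • x + d • y)) := by
    match_scalars; field_simp; ring
  have hy : y = (a * d - b * c)⁻¹ • (a • (c • x + d • y) - c • (a • x + b • y)) := by
    match_scalars; field_simp; ring
  exact ⟨hx ▸ p.smul_mem _ (p.sub_mem (p.smul_mem _ h₁) (p.smul_mem _ h₂)),
    hy ▸ p.smul_mem _ (p.sub_mem (p.smul_mem _ h₂) (p.smul_mem _ h₁))⟩

theorem Pi.single_mem_of_det_ne_zero {K ι : Type*} [Field K] [DecidableEq ι]
    {p : Submodule K (ι → K)} {u v : ι → K} {i j : ι}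
    (hu : u = u i • Pi.single i 1 + u j • Pi.single j 1)
    (hv : v = v i • Pi.single i 1 + v j • Pi.single j 1)
    (hdet : u i * v j - u j * v i ≠ 0) (hup : u ∈ p) (hvp : v ∈ p) :
    Pi.single i 1 ∈ p ∧ Pi.single j 1 ∈ p :=
  Submodule.mem_of_smul_add_smul_mem hdet (hu ▸ hup) (hv ▸ hvp)

theorem span_rollingCoords_eq_top {ρ a s : ℂ} (hρ : ρ ≠ 0) (hρ1 : ρ ^ 2 ≠ 1) (ha : a ≠ 0)
    (hs : s ≠ 0) (hP : ρ ^ 2 + 1 ≠ 0) :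
    Submodule.span ℂ (Set.range (rollingCoords ρ a s)) = ⊤ := by
  set p := Submodule.span ℂ (Set.range (rollingCoords ρ a s))
  -- rows `m` and `m + 3` are supported on the coordinates `m` and `m + 3`
  have hblock (m : Fin 6) (hm : m = 0 ∨ m = 1 ∨ m = 2) :
      Pi.single m 1 ∈ p ∧ Pi.single (m + 3) 1 ∈ p := by
    refine Pi.single_mem_of_det_ne_zero ?hu ?hv ?hdet (Submodule.subset_span ⟨m, rfl⟩)
      (Submodule.subset_span ⟨m + 3, rfl⟩)
    case hu | hv =>
      rcases hm with rfl | rfl | rfl <;> ext k <;> fin_cases k <;> simp [rollingCoords]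
    case hdet =>
      rcases hm with rfl | rfl | rfl <;>
        simp only [rollingCoords, Matrix.cons_val, Matrix.cons_val_zero, Matrix.cons_val_one,
          Fin.isValue, Fin.reduceAdd] <;>
        field_simp <;> grind
  obtain ⟨h0, h3⟩ := hblock 0 (.inl rfl)
  obtain ⟨h1, h4⟩ := hblock 1 (.inr (.inl rfl))
  obtain ⟨h2, h5⟩ := hblock 2 (.inr (.inr rfl))
  rw [eq_top_iff, ← (Pi.basisFun ℂ (Fin 6)).span_eq, Submodule.span_le]
  rintro _ ⟨i, rfl⟩
  rw [SetLike.mem_coe, Pi.basisFun_apply]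
  fin_cases i
  exacts [h0, h1, h2, h3, h4, h5]

section

variable {V : Type*} [AddCommGroup V] [Module ℂ V]

def sl2Frame (i₁ j₁ k₁ i₂ j₂ k₂ : V) : Fin 6 → V :=
  ![I • k₁, i₁ + I • j₁, i₁ - I • j₁, I • k₂, i₂ + I • j₂, i₂ - I • j₂]

theorem mem_of_sl2Frame_mem {p : Submodule ℂ V} {i j k : V} (hH : I • k ∈ p)
    (hE : i + I • j ∈ p) (hF : i - I • j ∈ p) : i ∈ p ∧ j ∈ p ∧ k ∈ p := by
  have hdet : (1 : ℂ) * -I - I * 1 ≠ 0 := by ring_nf; simp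
  obtain ⟨hi, hj⟩ := Submodule.mem_of_smul_add_smul_mem hdet
    (by rwa [one_smul]) (by rwa [one_smul, neg_smul, ← sub_eq_add_neg])
  refine ⟨hi, hj, ?_⟩
  simpa [smul_smul] using p.smul_mem (-I) hH

theorem span_sl2Frame_eq_top {i₁ j₁ k₁ i₂ j₂ k₂ : V}
    (h : Submodule.span ℂ (Set.range ![i₁, j₁, k₁, i₂, j₂, k₂]) = ⊤) :
    Submodule.span ℂ (Set.range (sl2Frame i₁ j₁ k₁ i₂ j₂ k₂)) = ⊤ := by
  set p := Submodule.span ℂ (Set.range (sl2Frame i₁ j₁ k₁ i₂ j₂ k₂))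
  have hmem (m : Fin 6) : sl2Frame i₁ j₁ k₁ i₂ j₂ k₂ m ∈ p := Submodule.subset_span ⟨m, rfl⟩
  obtain ⟨hi₁, hj₁, hk₁⟩ := mem_of_sl2Frame_mem (hmem 0) (hmem 1) (hmem 2)
  obtain ⟨hi₂, hj₂, hk₂⟩ := mem_of_sl2Frame_mem (hmem 3) (hmem 4) (hmem 5)
  rw [eq_top_iff, ← h, Submodule.span_le]
  rintro _ ⟨m, rfl⟩
  fin_cases m
  exacts [hi₁, hj₁, hk₁, hi₂, hj₂, hk₂]

theorem vec_eq_linearCombination_comp_rollingCoords {i1 j1 k1 i2 j2 k2 : V}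
    {ρ a s1 s2 s3 s4 s5 t1 t2 t3 : ℂ}
    (hs1 : s1 ≠ 0) (hP : ρ ^ 2 + 1 ≠ 0)
    (hs2 : s2 = -5 * a / (s1 * (ρ ^ 2 + 1)))
    (hs3 : s3 = -5 * I * a / (ρ ^ 2 + 1))
    (hs4 : s4 = 5 * I * s1 * a / (3 * (ρ ^ 2 + 1)))
    (hs5 : s5 = 25 * I * a ^ 2 / (3 * s1 * (ρ ^ 2 + 1) ^ 2))
    (ht1 : t1 = (3/2) * a)
    (ht2 : t2 = -(7/6) * a * s1)
    (ht3 : t3 = 35 * a ^ 2 / (6 * s1 * (ρ ^ 2 + 1)))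
    {v0 v1 v2 v3 v4 v5 : V}
    (hv0 : v0 = k1 + k2)
    (hv1 : v1 = i1 - ρ • i2)
    (hv2 : v2 = j1 - ρ • j2)
    (hv3 : v3 = k1 + (ρ ^ 2) • k2)
    (hv4 : v4 = j1 - (ρ ^ 3) • j2)
    (hv5 : v5 = i1 - (ρ ^ 3) • i2)
    {T X1 X2 X3 X4 X5 : V}
    (hT : T = I • v0)
    (hX1 : X1 = s1 • (v1 + I • v2))
    (hX2 : X2 = s2 • (v1 - I • v2))
    (hX3 : X3 = s3 • v3 + (t1 * I) • v0)
    (hX4 : X4 = s4 • (v4 - I • v5) + t2 • (v1 + I • v2))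
    (hX5 : X5 = s5 • (v4 + I • v5) + t3 • (v1 - I • v2)) :
    ![T, X1, X2, X3, X4, X5] =
      Fintype.linearCombination ℂ (sl2Frame i1 j1 k1 i2 j2 k2) ∘ rollingCoords ρ a s1 := by
  subst hs2 hs3 hs4 hs5 ht1 ht2 ht3 hv0 hv1 hv2 hv3 hv4 hv5 hT hX1 hX2 hX3 hX4 hX5
  ext m
  fin_cases m <;>
    simp only [Function.comp_apply, Fintype.linearCombination_apply, Fin.sum_univ_six, sl2Frame,
      rollingCoords, Matrix.cons_val, Matrix.cons_val_zero, Matrix.cons_val_one, Fin.isValue,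
      Fin.zero_eta, Fin.mk_one, Fin.reduceFinMk] <;>
    match_scalars <;> field_simp <;> grind [I_sq]

end

theorem lie_linearCombination_sl2Frame {L : Type*} [LieRing L] [LieAlgebra ℂ L]
    {i1 j1 k1 i2 j2 k2 : L}
    (hl01 : ⁅i1, j1⁆ = k1) (hl02 : ⁅i1, k1⁆ = -j1) (hl03 : ⁅i1, i2⁆ = 0) (hl04 : ⁅i1, j2⁆ = 0)
    (hl05 : ⁅i1, k2⁆ = 0) (hl12 : ⁅j1, k1⁆ = i1) (hl13 : ⁅j1, i2⁆ = 0) (hl14 : ⁅j1, j2⁆ = 0)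
    (hl15 : ⁅j1, k2⁆ = 0) (hl23 : ⁅k1, i2⁆ = 0) (hl24 : ⁅k1, j2⁆ = 0) (hl25 : ⁅k1, k2⁆ = 0)
    (hl34 : ⁅i2, j2⁆ = k2) (hl35 : ⁅i2, k2⁆ = -j2) (hl45 : ⁅j2, k2⁆ = i2) (x y : Fin 6 → ℂ) :
    ⁅Fintype.linearCombination ℂ (sl2Frame i1 j1 k1 i2 j2 k2) x,
      Fintype.linearCombination ℂ (sl2Frame i1 j1 k1 i2 j2 k2) y⁆ =
      Fintype.linearCombination ℂ (sl2Frame i1 j1 k1 i2 j2 k2) (sl2PairBracket x y) := by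
  refine lie_linearCombination_of_isSl2Basis (isSl2Basis_of_so3 hl01 hl02 hl12)
    (isSl2Basis_of_so3 hl34 hl35 hl45) (fun _ _ _ _ _ _ => ?_) x y
  simp only [lie_add, add_lie, lie_sub, sub_lie, lie_smul, smul_lie, hl03, hl04, hl05, hl13, hl14,
    hl15, hl23, hl24, hl25, smul_zero, add_zero, sub_zero]

theorem Submodule.span_range_comp_eq_top {ι R M N : Type*} [Semiring R] [AddCommMonoid M]
    [Module R M] [AddCommMonoid N] [Module R N] {f : M →ₗ[R] N} (hf : LinearMap.range f = ⊤)
    {v : ι → M} (hv : Submodule.span R (Set.range v) = ⊤) :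
    Submodule.span R (Set.range (f ∘ v)) = ⊤ := by
  rw [Set.range_comp, ← Submodule.map_span, hv, Submodule.map_top, hf]

theorem rolling_parameters_ne_zero {ρ : ℝ} (hρ : 1 < ρ) (hρ3 : ρ ≠ 3) :
    (ρ : ℂ) ≠ 0 ∧ (ρ : ℂ) ^ 2 ≠ 1 ∧ (ρ : ℂ) ^ 2 + 1 ≠ 0 ∧
      ((ρ : ℂ) ^ 2 - 9) * ((ρ : ℂ) ^ 2 - 1 / 9) ≠ 0 := by
  have h9 : ρ ^ 2 - 9 ≠ 0 := by
    rw [show ρ ^ 2 - 9 = (ρ - 3) * (ρ + 3) by ring]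
    exact mul_ne_zero (sub_ne_zero.mpr hρ3) (by linarith)
  refine ⟨by exact_mod_cast (by positivity : ρ ≠ 0), by exact_mod_cast (by nlinarith : ρ ^ 2 ≠ 1),
    by exact_mod_cast (by positivity : ρ ^ 2 + 1 ≠ 0), ?_⟩
  have hQ := Complex.ofReal_ne_zero.mpr (mul_ne_zero h9 (by nlinarith : ρ ^ 2 - 1 / 9 ≠ 0))
  push_cast at hQ
  exact hQ

theorem rolling_distribution_is_D6
    {L : Type*} [LieRing L] [LieAlgebra ℂ L]
    (i1 j1 k1 i2 j2 k2 : L)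
    (hlindep : LinearIndependent ℂ ![i1, j1, k1, i2, j2, k2])
    (hlspan : Submodule.span ℂ (Set.range ![i1, j1, k1, i2, j2, k2]) = ⊤)
    (hl01 : ⁅i1, j1⁆ = k1)
    (hl02 : ⁅i1, k1⁆ = -j1)
    (hl03 : ⁅i1, i2⁆ = 0)
    (hl04 : ⁅i1, j2⁆ = 0)
    (hl05 : ⁅i1, k2⁆ = 0)
    (hl12 : ⁅j1, k1⁆ = i1)
    (hl13 : ⁅j1, i2⁆ = 0)
    (hl14 : ⁅j1, j2⁆ = 0)
    (hl15 : ⁅j1, k2⁆ = 0)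
    (hl23 : ⁅k1, i2⁆ = 0)
    (hl24 : ⁅k1, j2⁆ = 0)
    (hl25 : ⁅k1, k2⁆ = 0)
    (hl34 : ⁅i2, j2⁆ = k2)
    (hl35 : ⁅i2, k2⁆ = -j2)
    (hl45 : ⁅j2, k2⁆ = i2)
    (ρ : ℝ) (hρ : 1 < ρ) (hρ3 : ρ ≠ 3)
    (a s1 s2 s3 s4 s5 t1 t2 t3 : ℂ)
    (ha : a ^ 2 = 4 * ((ρ : ℂ) ^ 2 + 1) ^ 2 / (((ρ : ℂ) ^ 2 - 9) * ((ρ : ℂ) ^ 2 - 1/9)))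
    (hs1 : s1 ≠ 0)
    (hs2 : s2 = -5 * a / (s1 * ((ρ : ℂ) ^ 2 + 1)))
    (hs3 : s3 = -5 * Complex.I * a / ((ρ : ℂ) ^ 2 + 1))
    (hs4 : s4 = 5 * Complex.I * s1 * a / (3 * ((ρ : ℂ) ^ 2 + 1)))
    (hs5 : s5 = 25 * Complex.I * a ^ 2 / (3 * s1 * ((ρ : ℂ) ^ 2 + 1) ^ 2))
    (ht1 : t1 = (3/2) * a)
    (ht2 : t2 = -(7/6) * a * s1)
    (ht3 : t3 = 35 * a ^ 2 / (6 * s1 * ((ρ : ℂ) ^ 2 + 1)))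
    (v0 v1 v2 v3 v4 v5 : L)
    (hv0 : v0 = k1 + k2)
    (hv1 : v1 = i1 - (ρ : ℂ) • i2)
    (hv2 : v2 = j1 - (ρ : ℂ) • j2)
    (hv3 : v3 = k1 + ((ρ : ℂ) ^ 2) • k2)
    (hv4 : v4 = j1 - ((ρ : ℂ) ^ 3) • j2)
    (hv5 : v5 = i1 - ((ρ : ℂ) ^ 3) • i2)
    (T X1 X2 X3 X4 X5 : L)
    (hT : T = Complex.I • v0)
    (hX1 : X1 = s1 • (v1 + Complex.I • v2))
    (hX2 : X2 = s2 • (v1 - Complex.I • v2))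
    (hX3 : X3 = s3 • v3 + (t1 * Complex.I) • v0)
    (hX4 : X4 = s4 • (v4 - Complex.I • v5) + t2 • (v1 + Complex.I • v2))
    (hX5 : X5 = s5 • (v4 + Complex.I • v5) + t3 • (v1 - Complex.I • v2)) :
    LinearIndependent ℂ ![T, X1, X2, X3, X4, X5] ∧
    Submodule.span ℂ (Set.range ![T, X1, X2, X3, X4, X5]) = ⊤ ∧
    (⁅T, X1⁆ = X1) ∧
    (⁅T, X2⁆ = -X2) ∧
    (⁅T, X3⁆ = 0) ∧
    (⁅T, X4⁆ = X4) ∧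
    (⁅T, X5⁆ = -X5) ∧
    (⁅X1, X2⁆ = (3*a) • T + (-2 : ℂ) • X3) ∧
    (⁅X1, X3⁆ = (2*a) • X1 + (3 : ℂ) • X4) ∧
    (⁅X1, X4⁆ = 0) ∧
    (⁅X1, X5⁆ = (6 : ℂ) • T + (-a) • X3) ∧
    (⁅X2, X3⁆ = (-(2*a)) • X2 + (-3 : ℂ) • X5) ∧
    (⁅X2, X4⁆ = (-6 : ℂ) • T + (a) • X3) ∧
    (⁅X2, X5⁆ = 0) ∧
    (⁅X3, X4⁆ = (-(a^2+3)) • X1) ∧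
    (⁅X3, X5⁆ = (a^2+3) • X2) ∧
    (⁅X4, X5⁆ = (a*(a^2-1)) • T + (-2 : ℂ) • X3) := by
  obtain ⟨hρ0, hρ1, hP, hQ⟩ := rolling_parameters_ne_zero hρ hρ3
  replace ha := (eq_div_iff hQ).mp ha
  have ha0 : a ≠ 0 := by
    rintro rfl
    exact pow_ne_zero 2 hP (by linear_combination -ha / 4)
  have hcoords := vec_eq_linearCombination_comp_rollingCoords hs1 hP hs2 hs3 hs4 hs5 ht1 ht2 ht3
    hv0 hv1 hv2 hv3 hv4 hv5 hT hX1 hX2 hX3 hX4 hX5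
  have hspan : Submodule.span ℂ (Set.range ![T, X1, X2, X3, X4, X5]) = ⊤ := by
    rw [hcoords]
    exact Submodule.span_range_comp_eq_top
      (by rw [Fintype.range_linearCombination, span_sl2Frame_eq_top hlspan])
      (span_rollingCoords_eq_top hρ0 hρ1 ha0 hs1 hP)
  have htable : IsD6Table (⁅·, ·⁆) a ![T, X1, X2, X3, X4, X5] := by
    rw [hcoords]
    exact (isD6Table_rollingCoords hs1 hP ha).map _ (lie_linearCombination_sl2Frame hl01 hl02 hl03
      hl04 hl05 hl12 hl13 hl14 hl15 hl23 hl24 hl25 hl34 hl35 hl45)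
  refine ⟨linearIndependent_of_top_le_span_of_card_eq_finrank hspan.ge ?_, hspan, htable⟩
  rw [← finrank_top, ← hlspan, finrank_span_eq_card hlindep]
end

section
/- Define I(ρ) = 4(ρ²+1)²/((ρ²−9)(ρ²−1/9)) for real ρ with ρ ∉ {3, −3, 1/3, −1/3}. Then: (i) I(−ρ) = I(ρ); (ii) I(1/ρ) = I(ρ) whenever ρ ≠ 0; (iii) I is strictly decreasing on the interval (1,3) and strictly decreasing on the interval (3,∞); (iv) I maps (1,3) onto (−∞, −9/4) and maps (3,∞) onto (4, ∞). -/
set_option maxHeartbeats 1000000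

private lemma rolling_mono_aux (a b : ℝ) (ha : 1 < a) (hab : a < b)
    (hD : 0 < ((a ^ 2 - 9) * (a ^ 2 - 1/9)) * ((b ^ 2 - 9) * (b ^ 2 - 1/9))) :
    4 * (b ^ 2 + 1) ^ 2 / ((b ^ 2 - 9) * (b ^ 2 - 1/9)) <
      4 * (a ^ 2 + 1) ^ 2 / ((a ^ 2 - 9) * (a ^ 2 - 1/9)) := by
  have hDa : (a ^ 2 - 9) * (a ^ 2 - 1/9) ≠ 0 := by
    intro h; rw [h, zero_mul] at hD; exact lt_irrefl 0 hD
  have hDb : (b ^ 2 - 9) * (b ^ 2 - 1/9) ≠ 0 := by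
    intro h; rw [h, mul_zero] at hD; exact lt_irrefl 0 hD
  rw [← sub_pos, div_sub_div _ _ hDa hDb]
  apply div_pos _ hD
  have key : 4 * (a ^ 2 + 1) ^ 2 * ((b ^ 2 - 9) * (b ^ 2 - 1/9)) -
      (a ^ 2 - 9) * (a ^ 2 - 1/9) * (4 * (b ^ 2 + 1) ^ 2) =
      (400/9) * (b ^ 2 - a ^ 2) * (a ^ 2 * b ^ 2 - 1) := by ring
  rw [key]
  have h1 : 0 < b ^ 2 - a ^ 2 := by nlinarith
  have ha2 : 1 < a ^ 2 := by nlinarith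
  have hb2 : 1 < b ^ 2 := by nlinarith
  have h2 : 0 < a ^ 2 * b ^ 2 - 1 := by
    nlinarith [mul_pos (sub_pos.2 ha2) (sub_pos.2 hb2)]
  positivity

theorem rolling_invariant_properties (I : ℝ → ℝ)
    (hI : ∀ ρ, I ρ = 4 * (ρ ^ 2 + 1) ^ 2 / ((ρ ^ 2 - 9) * (ρ ^ 2 - 1/9))) :
    (∀ ρ : ℝ, ρ ≠ 3 → ρ ≠ -3 → ρ ≠ 1/3 → ρ ≠ -1/3 → I (-ρ) = I ρ) ∧
    (∀ ρ : ℝ, ρ ≠ 0 → ρ ≠ 3 → ρ ≠ -3 → ρ ≠ 1/3 → ρ ≠ -1/3 → I (1/ρ) = I ρ) ∧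
    StrictAntiOn I (Set.Ioo 1 3) ∧
    StrictAntiOn I (Set.Ioi 3) ∧
    I '' Set.Ioo 1 3 = Set.Iio (-9/4) ∧
    I '' Set.Ioi 3 = Set.Ioi 4 := by
  have hIfun : I = fun ρ => 4 * (ρ ^ 2 + 1) ^ 2 / ((ρ ^ 2 - 9) * (ρ ^ 2 - 1/9)) :=
    funext hI
  have hcont : ∀ s : Set ℝ, (∀ x ∈ s, (x ^ 2 - 9) * (x ^ 2 - 1/9) ≠ 0) →
      ContinuousOn I s := by
    intro s hs
    rw [hIfun]
    exact ContinuousOn.div (by fun_prop) (by fun_prop) hs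
  refine ⟨?_, ?_, ?_, ?_, ?_, ?_⟩
  · intro ρ _ _ _ _
    rw [hI, hI]; ring_nf
  · intro ρ h0 h3 h3' h13 h13'
    have h1 : ρ ^ 2 - 9 ≠ 0 := by
      intro h
      rcases mul_eq_zero.1 (show (ρ - 3) * (ρ + 3) = 0 by nlinarith) with h' | h'
      · exact h3 (by linarith)
      · exact h3' (by linarith)
    have h2 : ρ ^ 2 - 1/9 ≠ 0 := by
      intro h
      rcases mul_eq_zero.1 (show (ρ - 1/3) * (ρ + 1/3) = 0 by nlinarith) with h' | h'
      · exact h13 (by linarith)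
      · exact h13' (by linarith)
    have hA1 : (1/ρ) ^ 2 - 9 ≠ 0 := by
      intro h
      apply h2
      field_simp at h
      nlinarith
    have hA2 : (1/ρ) ^ 2 - 1/9 ≠ 0 := by
      intro h
      apply h1
      field_simp at h
      nlinarith
    rw [hI, hI, div_eq_div_iff (mul_ne_zero hA1 hA2) (mul_ne_zero h1 h2)]
    field_simp
    ring
  · intro a ha b hb hab
    rw [hI, hI]
    apply rolling_mono_aux a b ha.1 hab
    have ha1 := ha.1; have ha3 := ha.2; have hb1 := hb.1; have hb3 := hb.2
    simp only [Set.mem_Ioo] at *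
    have h1 : (a ^ 2 - 9) * (a ^ 2 - 1/9) < 0 := by
      nlinarith [mul_pos (show (0:ℝ) < 9 - a ^ 2 by nlinarith) (show (0:ℝ) < a ^ 2 - 1/9 by nlinarith)]
    have h2 : (b ^ 2 - 9) * (b ^ 2 - 1/9) < 0 := by
      nlinarith [mul_pos (show (0:ℝ) < 9 - b ^ 2 by nlinarith) (show (0:ℝ) < b ^ 2 - 1/9 by nlinarith)]
    exact mul_pos_of_neg_of_neg h1 h2
  · intro a ha b hb hab
    simp only [Set.mem_Ioi] at ha hb
    rw [hI, hI]
    apply rolling_mono_aux a b (by linarith) hab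
    have h1 : 0 < (a ^ 2 - 9) * (a ^ 2 - 1/9) :=
      mul_pos (by nlinarith) (by nlinarith)
    have h2 : 0 < (b ^ 2 - 9) * (b ^ 2 - 1/9) :=
      mul_pos (by nlinarith) (by nlinarith)
    exact mul_pos h1 h2
  · ext y
    simp only [Set.mem_image, Set.mem_Ioo, Set.mem_Iio]
    constructor
    · rintro ⟨x, ⟨hx1, hx3⟩, rfl⟩
      rw [hI]
      have hD : (x ^ 2 - 9) * (x ^ 2 - 1/9) < 0 := by
        nlinarith [mul_pos (show (0:ℝ) < 9 - x ^ 2 by nlinarith) (show (0:ℝ) < x ^ 2 - 1/9 by nlinarith)]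
      rw [div_lt_iff_of_neg hD]
      nlinarith [mul_pos (show (0:ℝ) < x ^ 2 - 1 by nlinarith) (show (0:ℝ) < x ^ 2 - 1 by nlinarith)]
    · intro hy
      have hy0 : y < 0 := by linarith
      obtain ⟨b, hbdef⟩ : ∃ b : ℝ, b = 3 + 1/y := ⟨_, rfl⟩
      have hyinv : -4/9 < 1/y := by
        rw [lt_div_iff_of_neg hy0]; nlinarith
      have hyinv0 : 1/y < 0 := div_neg_of_pos_of_neg one_pos hy0
      have hb1 : (23:ℝ)/9 < b := by rw [hbdef]; linarith
      have hb3 : b < 3 := by rw [hbdef]; linarith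
      have hb3' : b - 3 = 1/y := by rw [hbdef]; ring
      have hyb : y * (b - 3) = 1 := by
        rw [hb3', mul_one_div, div_self hy0.ne]
      -- I b < y
      have hDb : (b ^ 2 - 9) * (b ^ 2 - 1/9) < 0 := by
        nlinarith [mul_pos (show (0:ℝ) < 9 - b ^ 2 by nlinarith) (show (0:ℝ) < b ^ 2 - 1/9 by nlinarith)]
      have hIb : I b < y := by
        rw [hI, div_lt_iff_of_neg hDb]
        have hfac : y * ((b ^ 2 - 9) * (b ^ 2 - 1/9)) =
            (y * (b - 3)) * ((b + 3) * (b ^ 2 - 1/9)) := by ring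
        rw [hfac, hyb, one_mul]
        nlinarith
      have hI1 : I 1 = -9/4 := by rw [hI]; norm_num
      have hc : ContinuousOn I (Set.Icc 1 b) := by
        apply hcont
        intro x hx
        rcases hx with ⟨hx1, hxb⟩
        have : (x ^ 2 - 9) * (x ^ 2 - 1/9) < 0 := by
          nlinarith [mul_pos (show (0:ℝ) < 9 - x ^ 2 by nlinarith) (show (0:ℝ) < x ^ 2 - 1/9 by nlinarith)]
        exact ne_of_lt this
      have hsub := intermediate_value_Ioo' (le_of_lt (by linarith : (1:ℝ) < b)) hc
      have hmem : y ∈ Set.Ioo (I b) (I 1) := ⟨hIb, by rw [hI1]; linarith⟩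
      obtain ⟨x, ⟨hx1, hxb⟩, hxy⟩ := hsub hmem
      exact ⟨x, ⟨hx1, by linarith⟩, hxy⟩
  · ext y
    simp only [Set.mem_image, Set.mem_Ioi]
    constructor
    · rintro ⟨x, hx3, rfl⟩
      rw [hI]
      have hD : 0 < (x ^ 2 - 9) * (x ^ 2 - 1/9) :=
        mul_pos (by nlinarith) (by nlinarith)
      rw [lt_div_iff₀ hD]
      nlinarith
    · intro hy
      have hy4 : (4:ℝ) < y := hy
      have hy0 : (0:ℝ) < y := by linarith
      obtain ⟨a, hadef⟩ : ∃ a : ℝ, a = 3 + 1/y := ⟨_, rfl⟩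
      have hainv : 0 < 1/y := by positivity
      have hainv4 : 1/y < 1/4 := by
        rw [div_lt_div_iff₀ hy0 (by norm_num : (0:ℝ) < 4)]; linarith
      have ha3 : 3 < a := by rw [hadef]; linarith
      have ha4 : a < 13/4 := by rw [hadef]; linarith
      have ha3' : a - 3 = 1/y := by rw [hadef]; ring
      have hya : y * (a - 3) = 1 := by
        rw [ha3', mul_one_div, div_self hy0.ne']
      obtain ⟨C, hCdef⟩ : ∃ C : ℝ, C = (82 * y / 9 + 8) / (y - 4) := ⟨_, rfl⟩
      have hC0 : 0 ≤ C := by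
        rw [hCdef]; apply div_nonneg (by linarith) (by linarith)
      obtain ⟨b, hbdef⟩ : ∃ b : ℝ, b = Real.sqrt C + 4 := ⟨_, rfl⟩
      have hb4 : (4:ℝ) ≤ b := by
        rw [hbdef]; linarith [Real.sqrt_nonneg C]
      have hab : a < b := by linarith
      have hbC : C < b ^ 2 := by
        rw [hbdef]
        have h := Real.sq_sqrt hC0
        nlinarith [Real.sqrt_nonneg C]
      have hbC' : 82 * y / 9 + 8 < (y - 4) * b ^ 2 := by
        have h4 : (0:ℝ) < y - 4 := by linarith
        have := (div_lt_iff₀ h4).1 (by rw [← hCdef]; exact hbC)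
        nlinarith [this]
      -- I a > y
      have hDa : 0 < (a ^ 2 - 9) * (a ^ 2 - 1/9) :=
        mul_pos (by nlinarith) (by nlinarith)
      have hIa : y < I a := by
        rw [hI, lt_div_iff₀ hDa]
        have hfac : y * ((a ^ 2 - 9) * (a ^ 2 - 1/9)) =
            (y * (a - 3)) * ((a + 3) * (a ^ 2 - 1/9)) := by ring
        rw [hfac, hya, one_mul]
        nlinarith
      -- I b < y
      have hDb : 0 < (b ^ 2 - 9) * (b ^ 2 - 1/9) :=
        mul_pos (by nlinarith) (by nlinarith)
      have hIb : I b < y := by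
        rw [hI, div_lt_iff₀ hDb]
        nlinarith [mul_pos (show (0:ℝ) < (y - 4) * b ^ 2 - (82 * y / 9 + 8) by linarith)
          (show (0:ℝ) < b ^ 2 by nlinarith)]
      have hc : ContinuousOn I (Set.Icc a b) := by
        apply hcont
        intro x hx
        rcases hx with ⟨hxa, hxb⟩
        have : 0 < (x ^ 2 - 9) * (x ^ 2 - 1/9) :=
          mul_pos (by nlinarith) (by nlinarith)
        exact ne_of_gt this
      have hsub := intermediate_value_Ioo' (le_of_lt hab) hc
      obtain ⟨x, ⟨hxa, hxb⟩, hxy⟩ := hsub ⟨hIb, hIa⟩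
      exact ⟨x, by linarith, hxy⟩
end

section
/- (Infinitesimal holonomy of the N.7 models.) In 𝔤, let 𝔥 := span{f01, f11, f21, f31, f32}. Then: (i) 𝔥 is a Lie subalgebra of 𝔤 whose only nonzero brackets of basis elements are [f01,f31]=−f32 and [f11,f21]=−3f32, so 𝔥 is isomorphic to the 5-dimensional Heisenberg Lie algebra (with center spanned by f32); (ii) for every c ∈ ℂ, 𝔥 is invariant under ad(x) for each of the seven N.7_c model elements Z2, f01, f10 + c·e10, f11, f21, f31, f32, and 𝔥 is the smallest subspace of 𝔤 that contains f01 and is invariant under ad of each of these seven elements. -/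
set_option maxHeartbeats 1000000

theorem N7_holonomy_heisenberg
    {g : Type*} [LieRing g] [LieAlgebra ℂ g]
    (Z1 Z2 e01 e10 e11 e21 e31 e32 f01 f10 f11 f21 f31 f32 : g)
    (hindep : LinearIndependent ℂ ![Z1, Z2, e01, e10, e11, e21, e31, e32, f01, f10, f11, f21, f31, f32])
    (hspan : Submodule.span ℂ (Set.range ![Z1, Z2, e01, e10, e11, e21, e31, e32, f01, f10, f11, f21, f31, f32]) = ⊤)
    (hZ1Z2 : ⁅Z1, Z2⁆ = 0)
    (hZ1e01 : ⁅Z1, e01⁆ = 0)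
    (hZ1e10 : ⁅Z1, e10⁆ = e10)
    (hZ1e11 : ⁅Z1, e11⁆ = e11)
    (hZ1e21 : ⁅Z1, e21⁆ = (2 : ℂ) • e21)
    (hZ1e31 : ⁅Z1, e31⁆ = (3 : ℂ) • e31)
    (hZ1e32 : ⁅Z1, e32⁆ = (3 : ℂ) • e32)
    (hZ1f01 : ⁅Z1, f01⁆ = 0)
    (hZ1f10 : ⁅Z1, f10⁆ = -f10)
    (hZ1f11 : ⁅Z1, f11⁆ = -f11)
    (hZ1f21 : ⁅Z1, f21⁆ = (-2 : ℂ) • f21)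
    (hZ1f31 : ⁅Z1, f31⁆ = (-3 : ℂ) • f31)
    (hZ1f32 : ⁅Z1, f32⁆ = (-3 : ℂ) • f32)
    (hZ2e01 : ⁅Z2, e01⁆ = e01)
    (hZ2e10 : ⁅Z2, e10⁆ = 0)
    (hZ2e11 : ⁅Z2, e11⁆ = e11)
    (hZ2e21 : ⁅Z2, e21⁆ = e21)
    (hZ2e31 : ⁅Z2, e31⁆ = e31)
    (hZ2e32 : ⁅Z2, e32⁆ = (2 : ℂ) • e32)
    (hZ2f01 : ⁅Z2, f01⁆ = -f01)
    (hZ2f10 : ⁅Z2, f10⁆ = 0)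
    (hZ2f11 : ⁅Z2, f11⁆ = -f11)
    (hZ2f21 : ⁅Z2, f21⁆ = -f21)
    (hZ2f31 : ⁅Z2, f31⁆ = -f31)
    (hZ2f32 : ⁅Z2, f32⁆ = (-2 : ℂ) • f32)
    (he01e10 : ⁅e01, e10⁆ = -e11)
    (he01e11 : ⁅e01, e11⁆ = 0)
    (he01e21 : ⁅e01, e21⁆ = 0)
    (he01e31 : ⁅e01, e31⁆ = e32)
    (he01e32 : ⁅e01, e32⁆ = 0)
    (he01f01 : ⁅e01, f01⁆ = -Z1 + (2 : ℂ) • Z2)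
    (he01f10 : ⁅e01, f10⁆ = 0)
    (he01f11 : ⁅e01, f11⁆ = f10)
    (he01f21 : ⁅e01, f21⁆ = 0)
    (he01f31 : ⁅e01, f31⁆ = 0)
    (he01f32 : ⁅e01, f32⁆ = -f31)
    (he10e11 : ⁅e10, e11⁆ = (2 : ℂ) • e21)
    (he10e21 : ⁅e10, e21⁆ = (-3 : ℂ) • e31)
    (he10e31 : ⁅e10, e31⁆ = 0)
    (he10e32 : ⁅e10, e32⁆ = 0)
    (he10f01 : ⁅e10, f01⁆ = 0)
    (he10f10 : ⁅e10, f10⁆ = (2 : ℂ) • Z1 + (-3 : ℂ) • Z2)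
    (he10f11 : ⁅e10, f11⁆ = (-3 : ℂ) • f01)
    (he10f21 : ⁅e10, f21⁆ = (-2 : ℂ) • f11)
    (he10f31 : ⁅e10, f31⁆ = f21)
    (he10f32 : ⁅e10, f32⁆ = 0)
    (he11e21 : ⁅e11, e21⁆ = (3 : ℂ) • e32)
    (he11e31 : ⁅e11, e31⁆ = 0)
    (he11e32 : ⁅e11, e32⁆ = 0)
    (he11f01 : ⁅e11, f01⁆ = e10)
    (he11f10 : ⁅e11, f10⁆ = (-3 : ℂ) • e01)
    (he11f11 : ⁅e11, f11⁆ = -Z1 + (3 : ℂ) • Z2)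
    (he11f21 : ⁅e11, f21⁆ = (2 : ℂ) • f10)
    (he11f31 : ⁅e11, f31⁆ = 0)
    (he11f32 : ⁅e11, f32⁆ = -f21)
    (he21e31 : ⁅e21, e31⁆ = 0)
    (he21e32 : ⁅e21, e32⁆ = 0)
    (he21f01 : ⁅e21, f01⁆ = 0)
    (he21f10 : ⁅e21, f10⁆ = (-2 : ℂ) • e11)
    (he21f11 : ⁅e21, f11⁆ = (2 : ℂ) • e10)
    (he21f21 : ⁅e21, f21⁆ = Z1)
    (he21f31 : ⁅e21, f31⁆ = -f10)
    (he21f32 : ⁅e21, f32⁆ = f11)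
    (he31e32 : ⁅e31, e32⁆ = 0)
    (he31f01 : ⁅e31, f01⁆ = 0)
    (he31f10 : ⁅e31, f10⁆ = e21)
    (he31f11 : ⁅e31, f11⁆ = 0)
    (he31f21 : ⁅e31, f21⁆ = -e10)
    (he31f31 : ⁅e31, f31⁆ = Z1 + -Z2)
    (he31f32 : ⁅e31, f32⁆ = f01)
    (he32f01 : ⁅e32, f01⁆ = -e31)
    (he32f10 : ⁅e32, f10⁆ = 0)
    (he32f11 : ⁅e32, f11⁆ = -e21)
    (he32f21 : ⁅e32, f21⁆ = e11)
    (he32f31 : ⁅e32, f31⁆ = e01)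
    (he32f32 : ⁅e32, f32⁆ = Z2)
    (hf01f10 : ⁅f01, f10⁆ = f11)
    (hf01f11 : ⁅f01, f11⁆ = 0)
    (hf01f21 : ⁅f01, f21⁆ = 0)
    (hf01f31 : ⁅f01, f31⁆ = -f32)
    (hf01f32 : ⁅f01, f32⁆ = 0)
    (hf10f11 : ⁅f10, f11⁆ = (-2 : ℂ) • f21)
    (hf10f21 : ⁅f10, f21⁆ = (3 : ℂ) • f31)
    (hf10f31 : ⁅f10, f31⁆ = 0)
    (hf10f32 : ⁅f10, f32⁆ = 0)
    (hf11f21 : ⁅f11, f21⁆ = (-3 : ℂ) • f32)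
    (hf11f31 : ⁅f11, f31⁆ = 0)
    (hf11f32 : ⁅f11, f32⁆ = 0)
    (hf21f31 : ⁅f21, f31⁆ = 0)
    (hf21f32 : ⁅f21, f32⁆ = 0)
    (hf31f32 : ⁅f31, f32⁆ = 0)
    (H : Submodule ℂ g)
    (hH : H = Submodule.span ℂ ({f01, f11, f21, f31, f32} : Set g)) :
    (∀ x ∈ H, ∀ y ∈ H, ⁅x, y⁆ ∈ H) ∧
    (∃ p1 p2 q1 q2 z : g,
      Submodule.span ℂ ({p1, p2, q1, q2, z} : Set g) = H ∧
      LinearIndependent ℂ ![p1, p2, q1, q2, z] ∧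
      ⁅p1, q1⁆ = z ∧ ⁅p2, q2⁆ = z ∧ ⁅p1, p2⁆ = 0 ∧ ⁅p1, q2⁆ = 0 ∧ ⁅p1, z⁆ = 0 ∧
      ⁅p2, q1⁆ = 0 ∧ ⁅p2, z⁆ = 0 ∧ ⁅q1, q2⁆ = 0 ∧ ⁅q1, z⁆ = 0 ∧ ⁅q2, z⁆ = 0) ∧
    (∀ y ∈ H, ((∀ x ∈ H, ⁅x, y⁆ = 0) ↔ y ∈ Submodule.span ℂ ({f32} : Set g))) ∧
    (∀ c : ℂ,
      (∀ y ∈ H, ⁅Z2, y⁆ ∈ H ∧ ⁅f01, y⁆ ∈ H ∧ ⁅f10 + c • e10, y⁆ ∈ H ∧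
        ⁅f11, y⁆ ∈ H ∧ ⁅f21, y⁆ ∈ H ∧ ⁅f31, y⁆ ∈ H ∧ ⁅f32, y⁆ ∈ H) ∧
      (∀ W : Submodule ℂ g, f01 ∈ W →
        (∀ y ∈ W, ⁅Z2, y⁆ ∈ W ∧ ⁅f01, y⁆ ∈ W ∧ ⁅f10 + c • e10, y⁆ ∈ W ∧
          ⁅f11, y⁆ ∈ W ∧ ⁅f21, y⁆ ∈ W ∧ ⁅f31, y⁆ ∈ W ∧ ⁅f32, y⁆ ∈ W) →
        H ≤ W)) := by

  subst hH
  set H : Submodule ℂ g := Submodule.span ℂ ({f01, f11, f21, f31, f32} : Set g) with hH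
  -- basic memberships
  have m01 : f01 ∈ H := Submodule.subset_span (by simp)
  have m11 : f11 ∈ H := Submodule.subset_span (by simp)
  have m21 : f21 ∈ H := Submodule.subset_span (by simp)
  have m31 : f31 ∈ H := Submodule.subset_span (by simp)
  have m32 : f32 ∈ H := Submodule.subset_span (by simp)
  -- reversed brackets among generators
  have s1101 : ⁅f11, f01⁆ = 0 := by rw [← lie_skew, hf01f11, neg_zero]
  have s2101 : ⁅f21, f01⁆ = 0 := by rw [← lie_skew, hf01f21, neg_zero]
  have s2111 : ⁅f21, f11⁆ = (3 : ℂ) • f32 := by rw [← lie_skew, hf11f21]; module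
  have s3101 : ⁅f31, f01⁆ = f32 := by rw [← lie_skew, hf01f31, neg_neg]
  have s3111 : ⁅f31, f11⁆ = 0 := by rw [← lie_skew, hf11f31, neg_zero]
  have s3121 : ⁅f31, f21⁆ = 0 := by rw [← lie_skew, hf21f31, neg_zero]
  have s3201 : ⁅f32, f01⁆ = 0 := by rw [← lie_skew, hf01f32, neg_zero]
  have s3211 : ⁅f32, f11⁆ = 0 := by rw [← lie_skew, hf11f32, neg_zero]
  have s3221 : ⁅f32, f21⁆ = 0 := by rw [← lie_skew, hf21f32, neg_zero]
  have s3231 : ⁅f32, f31⁆ = 0 := by rw [← lie_skew, hf31f32, neg_zero]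
  -- key: if x brackets all five generators into H, then x brackets all of H into H
  have key : ∀ x : g, ⁅x, f01⁆ ∈ H → ⁅x, f11⁆ ∈ H → ⁅x, f21⁆ ∈ H → ⁅x, f31⁆ ∈ H →
      ⁅x, f32⁆ ∈ H → ∀ y ∈ H, ⁅x, y⁆ ∈ H := by
    intro x h1 h2 h3 h4 h5 y hy
    rw [hH] at hy
    have hle : Submodule.span ℂ ({f01, f11, f21, f31, f32} : Set g) ≤
        Submodule.comap (LieAlgebra.ad ℂ g x) H := by
      rw [Submodule.span_le]
      rintro s hs
      simp only [Set.mem_insert_iff, Set.mem_singleton_iff] at hs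
      rcases hs with rfl | rfl | rfl | rfl | rfl <;>
        simp only [SetLike.mem_coe, Submodule.mem_comap, LieAlgebra.ad_apply] <;> assumption
    have := hle hy
    simpa only [Submodule.mem_comap, LieAlgebra.ad_apply] using this
  have part1 : ∀ x ∈ H, ∀ y ∈ H, ⁅x, y⁆ ∈ H := by
    intro x hx
    rw [hH] at hx
    induction hx using Submodule.span_induction with
    | mem s hs =>
      simp only [Set.mem_insert_iff, Set.mem_singleton_iff] at hs
      rcases hs with rfl | rfl | rfl | rfl | rfl
      · refine key _ ?_ ?_ ?_ ?_ ?_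
        · rw [lie_self]; exact H.zero_mem
        · rw [hf01f11]; exact H.zero_mem
        · rw [hf01f21]; exact H.zero_mem
        · rw [hf01f31]; exact H.neg_mem m32
        · rw [hf01f32]; exact H.zero_mem
      · refine key _ ?_ ?_ ?_ ?_ ?_
        · rw [s1101]; exact H.zero_mem
        · rw [lie_self]; exact H.zero_mem
        · rw [hf11f21]; exact H.smul_mem _ m32
        · rw [hf11f31]; exact H.zero_mem
        · rw [hf11f32]; exact H.zero_mem
      · refine key _ ?_ ?_ ?_ ?_ ?_
        · rw [s2101]; exact H.zero_mem
        · rw [s2111]; exact H.smul_mem _ m32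
        · rw [lie_self]; exact H.zero_mem
        · rw [hf21f31]; exact H.zero_mem
        · rw [hf21f32]; exact H.zero_mem
      · refine key _ ?_ ?_ ?_ ?_ ?_
        · rw [s3101]; exact m32
        · rw [s3111]; exact H.zero_mem
        · rw [s3121]; exact H.zero_mem
        · rw [lie_self]; exact H.zero_mem
        · rw [hf31f32]; exact H.zero_mem
      · refine key _ ?_ ?_ ?_ ?_ ?_
        · rw [s3201]; exact H.zero_mem
        · rw [s3211]; exact H.zero_mem
        · rw [s3221]; exact H.zero_mem
        · rw [s3231]; exact H.zero_mem
        · rw [lie_self]; exact H.zero_mem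
    | zero => intro y hy; rw [zero_lie]; exact H.zero_mem
    | add u v hu hv ihu ihv =>
      intro y hy; rw [add_lie]; exact H.add_mem (ihu y hy) (ihv y hy)
    | smul a u hu ihu =>
      intro y hy; rw [smul_lie]; exact H.smul_mem a (ihu y hy)
  have hf32ne : f32 ≠ 0 := by
    have := hindep.ne_zero 13
    simpa using this
  refine ⟨part1, ?_, ?_, ?_⟩
  · -- Heisenberg structure
    refine ⟨f01, f11, -f31, (-(1/3) : ℂ) • f21, f32, ?_, ?_, ?_, ?_, ?_, ?_, ?_, ?_, ?_, ?_, ?_, ?_⟩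
    · -- span equality
      apply le_antisymm
      · rw [Submodule.span_le]
        rintro s hs
        simp only [Set.mem_insert_iff, Set.mem_singleton_iff] at hs
        rcases hs with rfl | rfl | rfl | rfl | rfl
        · exact m01
        · exact m11
        · exact H.neg_mem m31
        · exact H.smul_mem _ m21
        · exact m32
      · rw [hH, Submodule.span_le]
        rintro s hs
        simp only [Set.mem_insert_iff, Set.mem_singleton_iff] at hs
        have g01 : f01 ∈ Submodule.span ℂ
            ({f01, f11, -f31, (-(1/3) : ℂ) • f21, f32} : Set g) := Submodule.subset_span (by simp)
        have g11 : f11 ∈ Submodule.span ℂ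
            ({f01, f11, -f31, (-(1/3) : ℂ) • f21, f32} : Set g) := Submodule.subset_span (by simp)
        have gq1 : -f31 ∈ Submodule.span ℂ
            ({f01, f11, -f31, (-(1/3) : ℂ) • f21, f32} : Set g) := Submodule.subset_span (by simp)
        have gq2 : (-(1/3) : ℂ) • f21 ∈ Submodule.span ℂ
            ({f01, f11, -f31, (-(1/3) : ℂ) • f21, f32} : Set g) := Submodule.subset_span (by simp)
        have g32 : f32 ∈ Submodule.span ℂ
            ({f01, f11, -f31, (-(1/3) : ℂ) • f21, f32} : Set g) := Submodule.subset_span (by simp)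
        rcases hs with rfl | rfl | rfl | rfl | rfl
        · exact g01
        · exact g11
        · have h1 := Submodule.smul_mem _ ((-3 : ℂ)) gq2
          rw [smul_smul] at h1
          have h2 : ((-3 : ℂ) * (-(1/3) : ℂ)) = 1 := by norm_num
          rw [h2, one_smul] at h1
          exact h1
        · have h1 := Submodule.neg_mem _ gq1
          rw [neg_neg] at h1
          exact h1
        · exact g32
    · -- linear independence
      have hcomp := hindep.comp (![8, 10, 12, 11, 13] : Fin 5 → Fin 14) (by decide)
      have hu := hcomp.units_smul
        ![1, 1, -1, Units.mk0 (-(1/3) : ℂ) (by norm_num), 1]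
      have hveq : (![f01, f11, -f31, (-(1/3) : ℂ) • f21, f32] : Fin 5 → g) =
          (![1, 1, -1, Units.mk0 (-(1/3) : ℂ) (by norm_num), 1] : Fin 5 → ℂˣ) •
          ((![Z1, Z2, e01, e10, e11, e21, e31, e32, f01, f10, f11, f21, f31, f32]) ∘
            (![8, 10, 12, 11, 13] : Fin 5 → Fin 14)) := by
        funext i
        fin_cases i
        · show f01 = ((1 : ℂˣ) : ℂ) • f01; simp
        · show f11 = ((1 : ℂˣ) : ℂ) • f11; simp
        · show -f31 = ((-1 : ℂˣ) : ℂ) • f31; simp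
        · show (-(1/3) : ℂ) • f21 =
            ((Units.mk0 (-(1/3) : ℂ) (by norm_num) : ℂˣ) : ℂ) • f21
          simp
        · show f32 = ((1 : ℂˣ) : ℂ) • f32; simp
      rw [hveq]
      exact hu
    · rw [lie_neg, hf01f31, neg_neg]
    · rw [lie_smul, hf11f21, smul_smul]; norm_num
    · exact hf01f11
    · rw [lie_smul, hf01f21, smul_zero]
    · exact hf01f32
    · rw [lie_neg, hf11f31, neg_zero]
    · exact hf11f32
    · rw [neg_lie, lie_smul, s3121, smul_zero, neg_zero]
    · rw [neg_lie, hf31f32, neg_zero]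
    · rw [smul_lie, hf21f32, smul_zero]
  · -- center
    have hcentral : ∀ x ∈ H, ⁅x, f32⁆ = 0 := by
      intro x hx
      rw [hH] at hx
      induction hx using Submodule.span_induction with
      | mem s hs =>
        simp only [Set.mem_insert_iff, Set.mem_singleton_iff] at hs
        rcases hs with rfl | rfl | rfl | rfl | rfl
        · exact hf01f32
        · exact hf11f32
        · exact hf21f32
        · exact hf31f32
        · exact lie_self _
      | zero => exact zero_lie f32
      | add u v hu hv ihu ihv => rw [add_lie, ihu, ihv, add_zero]
      | smul a u hu ihu => rw [smul_lie, ihu, smul_zero]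
    intro y hy
    constructor
    · intro hzero
      have hy' : y ∈ Submodule.span ℂ (Set.range ![f01, f11, f21, f31, f32]) := by
        rw [hH] at hy
        have hrange : Set.range (![f01, f11, f21, f31, f32] : Fin 5 → g) =
            ({f01, f11, f21, f31, f32} : Set g) := by
          simp only [Matrix.range_cons, Matrix.range_empty, Set.singleton_union,
            Set.union_empty, Set.union_insert, Set.union_singleton]
          ext x
          simp only [Set.mem_insert_iff, Set.mem_singleton_iff]
          tauto
        rw [hrange]
        exact hy
      rw [Submodule.mem_span_range_iff_exists_fun] at hy'
      obtain ⟨co, hco⟩ := hy'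
      have hyeq : y = co 0 • f01 + co 1 • f11 + co 2 • f21 + co 3 • f31 + co 4 • f32 := by
        rw [← hco, Fin.sum_univ_five]
        simp only [Matrix.cons_val_zero, Matrix.cons_val_one, Matrix.head_cons,
          Matrix.cons_val_two, Matrix.cons_val_three, Matrix.cons_val_four, Matrix.tail_cons]
      have hc3 : co 3 = 0 := by
        have h0 := hzero f01 m01
        rw [hyeq] at h0
        simp only [lie_add, lie_smul, lie_self, hf01f11, hf01f21, hf01f31, hf01f32, smul_zero,
          zero_add, add_zero, smul_neg] at h0
        have := neg_eq_zero.mp h0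
        rcases smul_eq_zero.mp this with h | h
        · exact h
        · exact absurd h hf32ne
      have hc0 : co 0 = 0 := by
        have h0 := hzero f31 m31
        rw [hyeq] at h0
        simp only [lie_add, lie_smul, lie_self, s3101, s3111, s3121, hf31f32, smul_zero,
          zero_add, add_zero] at h0
        rcases smul_eq_zero.mp h0 with h | h
        · exact h
        · exact absurd h hf32ne
      have hc2 : co 2 = 0 := by
        have h0 := hzero f11 m11
        rw [hyeq] at h0
        simp only [lie_add, lie_smul, lie_self, s1101, hf11f21, hf11f31, hf11f32, smul_zero,
          zero_add, add_zero, smul_smul] at h0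
        rcases smul_eq_zero.mp h0 with h | h
        · rcases mul_eq_zero.mp h with h' | h'
          · exact h'
          · norm_num at h'
        · exact absurd h hf32ne
      have hc1 : co 1 = 0 := by
        have h0 := hzero f21 m21
        rw [hyeq] at h0
        simp only [lie_add, lie_smul, lie_self, s2101, s2111, hf21f31, hf21f32, smul_zero,
          zero_add, add_zero, smul_smul] at h0
        rcases smul_eq_zero.mp h0 with h | h
        · rcases mul_eq_zero.mp h with h' | h'
          · exact h'
          · norm_num at h'
        · exact absurd h hf32ne
      rw [Submodule.mem_span_singleton]
      exact ⟨co 4, by rw [hyeq, hc0, hc1, hc2, hc3]; module⟩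
    · intro hy32 x hx
      rw [Submodule.mem_span_singleton] at hy32
      obtain ⟨a, rfl⟩ := hy32
      rw [lie_smul, hcentral x hx, smul_zero]
  · -- N.7 models
    intro c
    have hb01 : ⁅f10 + c • e10, f01⁆ = -f11 := by
      rw [add_lie, smul_lie, he10f01, smul_zero, add_zero, ← lie_skew, hf01f10]
    have hb11 : ⁅f10 + c • e10, f11⁆ = (-2 : ℂ) • f21 + (c * -3) • f01 := by
      rw [add_lie, smul_lie, hf10f11, he10f11, smul_smul]
    have hb21 : ⁅f10 + c • e10, f21⁆ = (3 : ℂ) • f31 + (c * -2) • f11 := by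
      rw [add_lie, smul_lie, hf10f21, he10f21, smul_smul]
    have hb31 : ⁅f10 + c • e10, f31⁆ = c • f21 := by
      rw [add_lie, smul_lie, hf10f31, he10f31, zero_add]
    have hb32 : ⁅f10 + c • e10, f32⁆ = 0 := by
      rw [add_lie, smul_lie, hf10f32, he10f32, smul_zero, add_zero]
    constructor
    · intro y hy
      refine ⟨?_, part1 f01 m01 y hy, ?_, part1 f11 m11 y hy, part1 f21 m21 y hy,
        part1 f31 m31 y hy, part1 f32 m32 y hy⟩
      · refine key Z2 ?_ ?_ ?_ ?_ ?_ y hy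
        · rw [hZ2f01]; exact H.neg_mem m01
        · rw [hZ2f11]; exact H.neg_mem m11
        · rw [hZ2f21]; exact H.neg_mem m21
        · rw [hZ2f31]; exact H.neg_mem m31
        · rw [hZ2f32]; exact H.smul_mem _ m32
      · refine key (f10 + c • e10) ?_ ?_ ?_ ?_ ?_ y hy
        · rw [hb01]; exact H.neg_mem m11
        · rw [hb11]; exact H.add_mem (H.smul_mem _ m21) (H.smul_mem _ m01)
        · rw [hb21]; exact H.add_mem (H.smul_mem _ m31) (H.smul_mem _ m11)
        · rw [hb31]; exact H.smul_mem _ m21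
        · rw [hb32]; exact H.zero_mem
    · intro W hW01 hWinv
      have hW11 : f11 ∈ W := by
        have := (hWinv f01 hW01).2.2.1
        rw [hb01] at this
        simpa using W.neg_mem this
      have hW21 : f21 ∈ W := by
        have ht := (hWinv f11 hW11).2.2.1
        rw [hb11] at ht
        have h2 : (-2 : ℂ) • f21 ∈ W := by
          have := W.sub_mem ht (W.smul_mem (c * -3) hW01)
          simpa using this
        have := W.smul_mem (-(1/2) : ℂ) h2
        rw [smul_smul] at this
        norm_num at this
        exact this
      have hW31 : f31 ∈ W := by
        have ht := (hWinv f21 hW21).2.2.1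
        rw [hb21] at ht
        have h3 : (3 : ℂ) • f31 ∈ W := by
          have := W.sub_mem ht (W.smul_mem (c * -2) hW11)
          simpa using this
        have := W.smul_mem ((1/3) : ℂ) h3
        rw [smul_smul] at this
        norm_num at this
        exact this
      have hW32 : f32 ∈ W := by
        have := (hWinv f31 hW31).2.1
        rw [hf01f31] at this
        simpa using W.neg_mem this
      rw [hH, Submodule.span_le]
      rintro s hs
      simp only [Set.mem_insert_iff, Set.mem_singleton_iff] at hs
      rcases hs with rfl | rfl | rfl | rfl | rfl
      · exact hW01
      · exact hW11
      · exact hW21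
      · exact hW31
      · exact hW32
end

section
/- (Full infinitesimal holonomy of the D.6_a models with a ≠ 0.) Let a ∈ ℂ with a ≠ 0. The smallest subspace of 𝔤 that contains the six elements e01, −Z1+2Z2, f01, e21, e10 − (3a/4)·e31, e11 − (3a/4)·e32 and is invariant under ad(x) for each of the six D.6_a model elements T = −Z1+2Z2, X1 = f10 + a·e11 + e32, X2 = f11 + a·e10 + e31, X3 = f21 + (a²+1)·e21, X4 = f31 + e11 + a(a²+1/3)·e32, X5 = f32 + e10 + a(a²+1/3)·e31 is all of 𝔤. -/
set_option maxHeartbeats 1000000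

theorem D6a_full_holonomy
    {g : Type*} [LieRing g] [LieAlgebra ℂ g]
    (Z1 Z2 e01 e10 e11 e21 e31 e32 f01 f10 f11 f21 f31 f32 : g)
    (hindep : LinearIndependent ℂ ![Z1, Z2, e01, e10, e11, e21, e31, e32, f01, f10, f11, f21, f31, f32])
    (hspan : Submodule.span ℂ (Set.range ![Z1, Z2, e01, e10, e11, e21, e31, e32, f01, f10, f11, f21, f31, f32]) = ⊤)
    (hZ1Z2 : ⁅Z1, Z2⁆ = 0)
    (hZ1e01 : ⁅Z1, e01⁆ = 0)
    (hZ1e10 : ⁅Z1, e10⁆ = e10)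
    (hZ1e11 : ⁅Z1, e11⁆ = e11)
    (hZ1e21 : ⁅Z1, e21⁆ = (2 : ℂ) • e21)
    (hZ1e31 : ⁅Z1, e31⁆ = (3 : ℂ) • e31)
    (hZ1e32 : ⁅Z1, e32⁆ = (3 : ℂ) • e32)
    (hZ1f01 : ⁅Z1, f01⁆ = 0)
    (hZ1f10 : ⁅Z1, f10⁆ = -f10)
    (hZ1f11 : ⁅Z1, f11⁆ = -f11)
    (hZ1f21 : ⁅Z1, f21⁆ = (-2 : ℂ) • f21)
    (hZ1f31 : ⁅Z1, f31⁆ = (-3 : ℂ) • f31)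
    (hZ1f32 : ⁅Z1, f32⁆ = (-3 : ℂ) • f32)
    (hZ2e01 : ⁅Z2, e01⁆ = e01)
    (hZ2e10 : ⁅Z2, e10⁆ = 0)
    (hZ2e11 : ⁅Z2, e11⁆ = e11)
    (hZ2e21 : ⁅Z2, e21⁆ = e21)
    (hZ2e31 : ⁅Z2, e31⁆ = e31)
    (hZ2e32 : ⁅Z2, e32⁆ = (2 : ℂ) • e32)
    (hZ2f01 : ⁅Z2, f01⁆ = -f01)
    (hZ2f10 : ⁅Z2, f10⁆ = 0)
    (hZ2f11 : ⁅Z2, f11⁆ = -f11)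
    (hZ2f21 : ⁅Z2, f21⁆ = -f21)
    (hZ2f31 : ⁅Z2, f31⁆ = -f31)
    (hZ2f32 : ⁅Z2, f32⁆ = (-2 : ℂ) • f32)
    (he01e10 : ⁅e01, e10⁆ = -e11)
    (he01e11 : ⁅e01, e11⁆ = 0)
    (he01e21 : ⁅e01, e21⁆ = 0)
    (he01e31 : ⁅e01, e31⁆ = e32)
    (he01e32 : ⁅e01, e32⁆ = 0)
    (he01f01 : ⁅e01, f01⁆ = -Z1 + (2 : ℂ) • Z2)
    (he01f10 : ⁅e01, f10⁆ = 0)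
    (he01f11 : ⁅e01, f11⁆ = f10)
    (he01f21 : ⁅e01, f21⁆ = 0)
    (he01f31 : ⁅e01, f31⁆ = 0)
    (he01f32 : ⁅e01, f32⁆ = -f31)
    (he10e11 : ⁅e10, e11⁆ = (2 : ℂ) • e21)
    (he10e21 : ⁅e10, e21⁆ = (-3 : ℂ) • e31)
    (he10e31 : ⁅e10, e31⁆ = 0)
    (he10e32 : ⁅e10, e32⁆ = 0)
    (he10f01 : ⁅e10, f01⁆ = 0)
    (he10f10 : ⁅e10, f10⁆ = (2 : ℂ) • Z1 + (-3 : ℂ) • Z2)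
    (he10f11 : ⁅e10, f11⁆ = (-3 : ℂ) • f01)
    (he10f21 : ⁅e10, f21⁆ = (-2 : ℂ) • f11)
    (he10f31 : ⁅e10, f31⁆ = f21)
    (he10f32 : ⁅e10, f32⁆ = 0)
    (he11e21 : ⁅e11, e21⁆ = (3 : ℂ) • e32)
    (he11e31 : ⁅e11, e31⁆ = 0)
    (he11e32 : ⁅e11, e32⁆ = 0)
    (he11f01 : ⁅e11, f01⁆ = e10)
    (he11f10 : ⁅e11, f10⁆ = (-3 : ℂ) • e01)
    (he11f11 : ⁅e11, f11⁆ = -Z1 + (3 : ℂ) • Z2)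
    (he11f21 : ⁅e11, f21⁆ = (2 : ℂ) • f10)
    (he11f31 : ⁅e11, f31⁆ = 0)
    (he11f32 : ⁅e11, f32⁆ = -f21)
    (he21e31 : ⁅e21, e31⁆ = 0)
    (he21e32 : ⁅e21, e32⁆ = 0)
    (he21f01 : ⁅e21, f01⁆ = 0)
    (he21f10 : ⁅e21, f10⁆ = (-2 : ℂ) • e11)
    (he21f11 : ⁅e21, f11⁆ = (2 : ℂ) • e10)
    (he21f21 : ⁅e21, f21⁆ = Z1)
    (he21f31 : ⁅e21, f31⁆ = -f10)
    (he21f32 : ⁅e21, f32⁆ = f11)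
    (he31e32 : ⁅e31, e32⁆ = 0)
    (he31f01 : ⁅e31, f01⁆ = 0)
    (he31f10 : ⁅e31, f10⁆ = e21)
    (he31f11 : ⁅e31, f11⁆ = 0)
    (he31f21 : ⁅e31, f21⁆ = -e10)
    (he31f31 : ⁅e31, f31⁆ = Z1 + -Z2)
    (he31f32 : ⁅e31, f32⁆ = f01)
    (he32f01 : ⁅e32, f01⁆ = -e31)
    (he32f10 : ⁅e32, f10⁆ = 0)
    (he32f11 : ⁅e32, f11⁆ = -e21)
    (he32f21 : ⁅e32, f21⁆ = e11)
    (he32f31 : ⁅e32, f31⁆ = e01)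
    (he32f32 : ⁅e32, f32⁆ = Z2)
    (hf01f10 : ⁅f01, f10⁆ = f11)
    (hf01f11 : ⁅f01, f11⁆ = 0)
    (hf01f21 : ⁅f01, f21⁆ = 0)
    (hf01f31 : ⁅f01, f31⁆ = -f32)
    (hf01f32 : ⁅f01, f32⁆ = 0)
    (hf10f11 : ⁅f10, f11⁆ = (-2 : ℂ) • f21)
    (hf10f21 : ⁅f10, f21⁆ = (3 : ℂ) • f31)
    (hf10f31 : ⁅f10, f31⁆ = 0)
    (hf10f32 : ⁅f10, f32⁆ = 0)
    (hf11f21 : ⁅f11, f21⁆ = (-3 : ℂ) • f32)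
    (hf11f31 : ⁅f11, f31⁆ = 0)
    (hf11f32 : ⁅f11, f32⁆ = 0)
    (hf21f31 : ⁅f21, f31⁆ = 0)
    (hf21f32 : ⁅f21, f32⁆ = 0)
    (hf31f32 : ⁅f31, f32⁆ = 0)
    (a : ℂ) (ha : a ≠ 0) :
    ∀ W : Submodule ℂ g,
      e01 ∈ W → -Z1 + (2 : ℂ) • Z2 ∈ W → f01 ∈ W → e21 ∈ W →
      e10 - (3 * a / 4) • e31 ∈ W → e11 - (3 * a / 4) • e32 ∈ W →
      (∀ y ∈ W, ⁅-Z1 + (2 : ℂ) • Z2, y⁆ ∈ W ∧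
        ⁅f10 + a • e11 + e32, y⁆ ∈ W ∧
        ⁅f11 + a • e10 + e31, y⁆ ∈ W ∧
        ⁅f21 + (a ^ 2 + 1) • e21, y⁆ ∈ W ∧
        ⁅f31 + e11 + (a * (a ^ 2 + 1/3)) • e32, y⁆ ∈ W ∧
        ⁅f32 + e10 + (a * (a ^ 2 + 1/3)) • e31, y⁆ ∈ W) →
      W = ⊤ := by
  intro W h1 h2 h3 h4 h5 h6 hstab
  -- reversed brackets
  have r1 : ⁅f10, e21⁆ = -((-2 : ℂ) • e11) := by rw [← lie_skew, he21f10]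
  have r2 : ⁅e32, e21⁆ = -(0 : g) := by rw [← lie_skew, he21e32]
  have r3 : ⁅f11, e21⁆ = -((2 : ℂ) • e10) := by rw [← lie_skew, he21f11]
  have r4 : ⁅e31, e21⁆ = -(0 : g) := by rw [← lie_skew, he21e31]
  have r5 : ⁅f21, e21⁆ = -Z1 := by rw [← lie_skew, he21f21]
  have r6 : ⁅f31, e21⁆ = -(-f10) := by rw [← lie_skew, he21f31]
  have r7 : ⁅f32, e21⁆ = -f11 := by rw [← lie_skew, he21f32]
  have r8 : ⁅f32, e11⁆ = -(-f21) := by rw [← lie_skew, he11f32]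
  have r9 : ⁅e31, e11⁆ = -(0 : g) := by rw [← lie_skew, he11e31]
  have r10 : ⁅e10, e11⁆ = (2 : ℂ) • e21 := he10e11
  have r11 : ⁅f32, e32⁆ = -Z2 := by rw [← lie_skew, he32f32]
  have r12 : ⁅e31, e32⁆ = (0 : g) := he31e32
  have r13 : ⁅f31, Z1⁆ = -((-3 : ℂ) • f31) := by rw [← lie_skew, hZ1f31]
  have r14 : ⁅f31, Z2⁆ = -(-f31) := by rw [← lie_skew, hZ2f31]
  have r15 : ⁅e11, Z1⁆ = -e11 := by rw [← lie_skew, hZ1e11]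
  have r16 : ⁅e11, Z2⁆ = -e11 := by rw [← lie_skew, hZ2e11]
  have r17 : ⁅e32, Z1⁆ = -((3 : ℂ) • e32) := by rw [← lie_skew, hZ1e32]
  have r18 : ⁅e32, Z2⁆ = -((2 : ℂ) • e32) := by rw [← lie_skew, hZ2e32]
  have r19 : ⁅f31, f01⁆ = -(-f32) := by rw [← lie_skew, hf01f31]
  have r20 : ⁅e11, f01⁆ = e10 := he11f01
  have r21 : ⁅e32, f01⁆ = -e31 := he32f01
  -- stability components
  obtain ⟨hT4, h14, h24, h34, h44, h54⟩ := hstab e21 h4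
  obtain ⟨-, -, -, -, -, h56⟩ := hstab (e11 - (3 * a / 4) • e32) h6
  obtain ⟨-, -, -, -, h4T, -⟩ := hstab (-Z1 + (2 : ℂ) • Z2) h2
  obtain ⟨-, -, -, -, h4f, -⟩ := hstab f01 h3
  -- Step 1: Z1
  have hb34 : ⁅f21 + (a ^ 2 + 1) • e21, e21⁆ = -Z1 := by
    simp only [add_lie, smul_lie, lie_self, r5, smul_zero, add_zero]
  rw [hb34] at h34
  have hZ1 : Z1 ∈ W := by simpa using W.neg_mem h34
  -- Step 2: Z2
  have hZ2 : Z2 ∈ W := by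
    have heq : Z2 = ((1 : ℂ) / 2) • ((-Z1 + (2 : ℂ) • Z2) + Z1) := by module
    rw [heq]; exact W.smul_mem _ (W.add_mem h2 hZ1)
  -- Step 3: e32
  have hb14 : ⁅f10 + a • e11 + e32, e21⁆ = (2 : ℂ) • e11 + (3 * a) • e32 := by
    simp only [add_lie, smul_lie, r1, r2, he11e21]
    module
  rw [hb14] at h14
  have hcomb32 : ((2 : ℂ) • e11 + (3 * a) • e32) - (2 : ℂ) • (e11 - (3 * a / 4) • e32) ∈ W :=
    W.sub_mem h14 (W.smul_mem _ h6)
  have he32m : e32 ∈ W := by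
    have hexq : e32 = ((2 : ℂ) / (9 * a)) •
        (((2 : ℂ) • e11 + (3 * a) • e32) - (2 : ℂ) • (e11 - (3 * a / 4) • e32)) := by
      match_scalars <;> field_simp <;> ring
    rw [hexq]; exact W.smul_mem _ hcomb32
  -- Step 4: e11
  have he11m : e11 ∈ W := by
    have hexq : e11 = (e11 - (3 * a / 4) • e32) + (3 * a / 4) • e32 := by module
    rw [hexq]; exact W.add_mem h6 (W.smul_mem _ he32m)
  -- Step 5: e31
  have hb24 : ⁅f11 + a • e10 + e31, e21⁆ = (-2 : ℂ) • e10 + (-3 * a) • e31 := by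
    simp only [add_lie, smul_lie, r3, r4, he10e21]
    module
  rw [hb24] at h24
  have hcomb31 : ((-2 : ℂ) • e10 + (-3 * a) • e31) + (2 : ℂ) • (e10 - (3 * a / 4) • e31) ∈ W :=
    W.add_mem h24 (W.smul_mem _ h5)
  have he31m : e31 ∈ W := by
    have hexq : e31 = ((-2 : ℂ) / (9 * a)) •
        (((-2 : ℂ) • e10 + (-3 * a) • e31) + (2 : ℂ) • (e10 - (3 * a / 4) • e31)) := by
      match_scalars <;> field_simp <;> ring
    rw [hexq]; exact W.smul_mem _ hcomb31
  -- Step 6: e10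
  have he10m : e10 ∈ W := by
    have hexq : e10 = (e10 - (3 * a / 4) • e31) + (3 * a / 4) • e31 := by module
    rw [hexq]; exact W.add_mem h5 (W.smul_mem _ he31m)
  -- Step 7: f10
  have hb44 : ⁅f31 + e11 + (a * (a ^ 2 + 1/3)) • e32, e21⁆ = f10 + (3 : ℂ) • e32 := by
    simp only [add_lie, smul_lie, r6, r2, he11e21]
    module
  rw [hb44] at h44
  have hf10m : f10 ∈ W := by
    have hexq : f10 = (f10 + (3 : ℂ) • e32) - (3 : ℂ) • e32 := by module
    rw [hexq]; exact W.sub_mem h44 (W.smul_mem _ he32m)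
  -- Step 8: f11
  have hb54 : ⁅f32 + e10 + (a * (a ^ 2 + 1/3)) • e31, e21⁆ = -f11 + (-3 : ℂ) • e31 := by
    simp only [add_lie, smul_lie, r7, r4, he10e21]
    module
  rw [hb54] at h54
  have hf11m : f11 ∈ W := by
    have hexq : f11 = -((-f11 + (-3 : ℂ) • e31) + (3 : ℂ) • e31) := by module
    rw [hexq]; exact W.neg_mem (W.add_mem h54 (W.smul_mem _ he31m))
  -- Step 9: f21
  have hb56 : ⁅f32 + e10 + (a * (a ^ 2 + 1/3)) • e31, e11 - (3 * a / 4) • e32⁆ =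
      f21 + (2 : ℂ) • e21 + (3 * a / 4) • Z2 := by
    simp only [lie_sub, lie_smul, add_lie, smul_lie, r8, r9, r10, r11, r12, he10e32]
    module
  rw [hb56] at h56
  have hf21m : f21 ∈ W := by
    have hexq : f21 = (f21 + (2 : ℂ) • e21 + (3 * a / 4) • Z2) - (2 : ℂ) • e21 - (3 * a / 4) • Z2 := by
      module
    rw [hexq]; exact W.sub_mem (W.sub_mem h56 (W.smul_mem _ h4)) (W.smul_mem _ hZ2)
  -- Step 10: f31
  have hb4T : ⁅f31 + e11 + (a * (a ^ 2 + 1/3)) • e32, -Z1 + (2 : ℂ) • Z2⁆ =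
      -f31 - e11 - (a * (a ^ 2 + 1/3)) • e32 := by
    simp only [lie_add, lie_neg, lie_smul, add_lie, smul_lie, r13, r14, r15, r16, r17, r18]
    module
  rw [hb4T] at h4T
  have hf31m : f31 ∈ W := by
    have hexq : f31 = -((-f31 - e11 - (a * (a ^ 2 + 1/3)) • e32) + e11
        + (a * (a ^ 2 + 1/3)) • e32) := by module
    rw [hexq]
    exact W.neg_mem (W.add_mem (W.add_mem h4T he11m) (W.smul_mem _ he32m))
  -- Step 11: f32
  have hb4f : ⁅f31 + e11 + (a * (a ^ 2 + 1/3)) • e32, f01⁆ =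
      f32 + e10 - (a * (a ^ 2 + 1/3)) • e31 := by
    simp only [add_lie, smul_lie, r19, r20, r21]
    module
  rw [hb4f] at h4f
  have hf32m : f32 ∈ W := by
    have hexq : f32 = (f32 + e10 - (a * (a ^ 2 + 1/3)) • e31) - e10
        + (a * (a ^ 2 + 1/3)) • e31 := by module
    rw [hexq]
    exact W.add_mem (W.sub_mem h4f he10m) (W.smul_mem _ he31m)
  -- conclude
  refine le_antisymm le_top ?_
  rw [← hspan, Submodule.span_le]
  rintro x ⟨i, rfl⟩
  fin_cases i
  · exact hZ1
  · exact hZ2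
  · exact h1
  · exact he10m
  · exact he11m
  · exact h4
  · exact he31m
  · exact he32m
  · exact h3
  · exact hf10m
  · exact hf11m
  · exact hf21m
  · exact hf31m
  · exact hf32m
end
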